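/- arXiv:2406.19958 — 5 statements merged into one kernel-verified Lean document; each statement's English description precedes it below -/
import Mathlib

section
/- Let (X_t) be an irreducible and aperiodic Markov chain on a finite state space Ω with transition matrix P and stationary distribution π, started at an initial state x₀ ∈ Ω. Let c > 0, let x ∈ Ω and let C ⊆ Ω be a nonempty subset with P{τ_x < τ_C | X₀ = x₀} ≥ c. Let B ⊆ Ω be such that every path from x to C meets B, i.e. for every finite sequence x = z₀, z₁, …, z_k with P(z_{i−1}, z_i) > 0 for 1 ≤ i ≤ k and z_k ∈ C, there exists 0 ≤ i ≤ k with z_i ∈ B. Then E[τ_C | X₀ = x₀] ≥ c·π(x)/π(B). -/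
open MeasureTheory
open scoped ENNReal

/-- The hitting time of a set `A` by a trajectory `ω`, valued in `ℝ≥0∞`
(so that it is `∞` when `A` is never visited). -/
noncomputable def hitTime {Ω : Type*} (A : Set Ω) (ω : ℕ → Ω) : ℝ≥0∞ :=
  ⨅ (n : ℕ) (_ : ω n ∈ A), (n : ℝ≥0∞)

/-- `μ` is the law of the time-homogeneous Markov chain on the finite state space `Ω`
with transition matrix `P` started at `x₀`, characterized by its cylinder probabilities. -/
def IsMarkovChain {Ω : Type*} [Fintype Ω] [DecidableEq Ω] [MeasurableSpace Ω]
    (P : Matrix Ω Ω ℝ) (x₀ : Ω) (μ : Measure (ℕ → Ω)) : Prop :=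
  ∀ (n : ℕ) (z : ℕ → Ω),
    μ {ω | ∀ i ≤ n, ω i = z i} =
      ENNReal.ofReal ((if z 0 = x₀ then (1 : ℝ) else 0) *
        ∏ i ∈ Finset.range n, P (z i) (z (i + 1)))

set_option linter.unusedSectionVars false
set_option maxHeartbeats 1000000

namespace HTLB

variable {Ω : Type*} [Fintype Ω] [DecidableEq Ω]

noncomputable def mass (P : Matrix Ω Ω ℝ) : (ℕ → Set Ω) → ℕ → Ω → ℝ
  | Q, 0, y => Set.indicator (Q 0) 1 y
  | Q, n+1, y =>
      Set.indicator (Q 0) (fun _ => ∑ z, P y z * mass P (fun i => Q (i+1)) n z) y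

lemma mass_zero (P : Matrix Ω Ω ℝ) (Q : ℕ → Set Ω) (y : Ω) :
    mass P Q 0 y = Set.indicator (Q 0) 1 y := rfl

lemma mass_succ (P : Matrix Ω Ω ℝ) (Q : ℕ → Set Ω) (n : ℕ) (y : Ω) :
    mass P Q (n+1) y =
      Set.indicator (Q 0) (fun _ => ∑ z, P y z * mass P (fun i => Q (i+1)) n z) y := rfl

variable {P : Matrix Ω Ω ℝ}

lemma mass_nonneg (hP0 : ∀ x y, 0 ≤ P x y) (Q : ℕ → Set Ω) (n : ℕ) (y : Ω) :
    0 ≤ mass P Q n y := by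
  induction n generalizing Q y with
  | zero =>
      rw [mass_zero]
      by_cases h : y ∈ Q 0
      · simp [Set.indicator_of_mem h]
      · simp [Set.indicator_of_notMem h]
  | succ n ih =>
      rw [mass_succ]
      by_cases h : y ∈ Q 0
      · rw [Set.indicator_of_mem h]
        exact Finset.sum_nonneg fun z _ => mul_nonneg (hP0 _ _) (ih _ _)
      · simp [Set.indicator_of_notMem h]

lemma mass_mono_set (hP0 : ∀ x y, 0 ≤ P x y) {Q Q' : ℕ → Set Ω}
    (hQ : ∀ i, Q i ⊆ Q' i) (n : ℕ) (y : Ω) :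
    mass P Q n y ≤ mass P Q' n y := by
  induction n generalizing Q Q' y with
  | zero =>
      rw [mass_zero, mass_zero]
      by_cases h : y ∈ Q 0
      · rw [Set.indicator_of_mem h, Set.indicator_of_mem (hQ 0 h)]
      · rw [Set.indicator_of_notMem h]
        by_cases h' : y ∈ Q' 0
        · simp [Set.indicator_of_mem h']
        · simp [Set.indicator_of_notMem h']
  | succ n ih =>
      rw [mass_succ, mass_succ]
      by_cases h : y ∈ Q 0
      · rw [Set.indicator_of_mem h, Set.indicator_of_mem (hQ 0 h)]
        exact Finset.sum_le_sum fun z _ =>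
          mul_le_mul_of_nonneg_left (ih (fun i => hQ (i+1)) _) (hP0 _ _)
      · rw [Set.indicator_of_notMem h]
        by_cases h' : y ∈ Q' 0
        · rw [Set.indicator_of_mem h']
          exact Finset.sum_nonneg fun z _ => mul_nonneg (hP0 _ _) (mass_nonneg hP0 _ _ _)
        · rw [Set.indicator_of_notMem h']

lemma mass_univ (hP1 : ∀ x, ∑ y, P x y = 1) (n : ℕ) (y : Ω) :
    mass P (fun _ => Set.univ) n y = 1 := by
  induction n generalizing y with
  | zero => rw [mass_zero]; simp
  | succ n ih =>
      rw [mass_succ, Set.indicator_of_mem (Set.mem_univ y)]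
      simp only [ih]
      simpa using hP1 y

lemma mass_le_one (hP0 : ∀ x y, 0 ≤ P x y) (hP1 : ∀ x, ∑ y, P x y = 1)
    (Q : ℕ → Set Ω) (n : ℕ) (y : Ω) : mass P Q n y ≤ 1 := by
  have h := mass_mono_set hP0 (Q := Q) (Q' := fun _ => Set.univ) (fun i => Set.subset_univ _) n y
  rwa [mass_univ hP1] at h

/-- the `j`-th piece of the complement decomposition of the rectangle given by `Q`. -/
def Qfail (Q : ℕ → Set Ω) (j : ℕ) : ℕ → Set Ω :=
  fun i => if i < j then Q i else if i = j then (Q i)ᶜ else Set.univ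

lemma Qfail_shift (Q : ℕ → Set Ω) (j : ℕ) :
    (fun i => Qfail Q (j+1) (i+1)) = Qfail (fun i => Q (i+1)) j := by
  funext i
  simp only [Qfail, Nat.add_lt_add_iff_right, Nat.add_right_cancel_iff]

lemma mass_add_fail (hP1 : ∀ x, ∑ y, P x y = 1) (Q : ℕ → Set Ω) (n : ℕ) (y : Ω) :
    mass P Q n y + ∑ j ∈ Finset.range (n+1), mass P (Qfail Q j) n y = 1 := by
  induction n generalizing Q y with
  | zero =>
      rw [mass_zero]
      rw [show (0:ℕ)+1 = 1 from rfl, Finset.range_one, Finset.sum_singleton, mass_zero]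
      rw [show Qfail Q 0 0 = (Q 0)ᶜ by simp [Qfail]]
      by_cases h : y ∈ Q 0
      · rw [Set.indicator_of_mem h, Set.indicator_of_notMem (by simpa using h)]
        simp
      · rw [Set.indicator_of_notMem h, Set.indicator_of_mem (by simpa using h)]
        simp
  | succ n ih =>
      rw [Finset.sum_range_succ']
      -- j = 0 piece
      have h0 : mass P (Qfail Q 0) (n+1) y = Set.indicator (Q 0)ᶜ 1 y := by
        rw [mass_succ]
        have hsh : (fun i => Qfail Q 0 (i+1)) = (fun _ => (Set.univ : Set Ω)) := by
          funext i; simp [Qfail]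
        have hQ0 : Qfail Q 0 0 = (Q 0)ᶜ := by simp [Qfail]
        rw [hsh, hQ0]
        by_cases h : y ∈ (Q 0)ᶜ
        · rw [Set.indicator_of_mem h, Set.indicator_of_mem h]
          simp only [mass_univ hP1, mul_one]
          simpa using hP1 y
        · rw [Set.indicator_of_notMem h, Set.indicator_of_notMem h]
      rw [h0]
      have hj : ∀ j, mass P (Qfail Q (j+1)) (n+1) y =
          Set.indicator (Q 0) (fun _ =>
            ∑ z, P y z * mass P (Qfail (fun i => Q (i+1)) j) n z) y := by
        intro j
        rw [mass_succ]
        have hQ0 : Qfail Q (j+1) 0 = Q 0 := by simp [Qfail]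
        rw [Qfail_shift, hQ0]
      simp only [hj]
      rw [mass_succ]
      by_cases h : y ∈ Q 0
      · rw [Set.indicator_of_mem h, Set.indicator_of_notMem (by simpa using h)]
        simp only [Set.indicator_of_mem h]
        rw [add_zero]
        have : ∀ z, P y z * mass P (fun i => Q (i+1)) n z +
            ∑ j ∈ Finset.range (n+1), P y z * mass P (Qfail (fun i => Q (i+1)) j) n z
            = P y z := by
          intro z
          rw [← Finset.mul_sum, ← mul_add, ih (fun i => Q (i+1)) z, mul_one]
        calc (∑ z, P y z * mass P (fun i => Q (i+1)) n z) +
              ∑ j ∈ Finset.range (n+1), ∑ z, P y z * mass P (Qfail (fun i => Q (i+1)) j) n z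
            = ∑ z, (P y z * mass P (fun i => Q (i+1)) n z +
              ∑ j ∈ Finset.range (n+1), P y z * mass P (Qfail (fun i => Q (i+1)) j) n z) := by
              rw [Finset.sum_add_distrib, Finset.sum_comm]
          _ = ∑ z, P y z := Finset.sum_congr rfl fun z _ => this z
          _ = 1 := hP1 y
      · rw [Set.indicator_of_notMem h, Set.indicator_of_mem (by simpa using h)]
        simp only [Set.indicator_of_notMem h]
        simp

lemma sum_fun_succ {n : ℕ} {M : Type*} [AddCommMonoid M] (F : (Fin (n+1) → Ω) → M) :
    ∑ z : Fin (n+1) → Ω, F z = ∑ a : Ω, ∑ w : Fin n → Ω, F (Fin.cons a w) := by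
  rw [← (Fin.consEquiv (fun _ : Fin (n+1) => Ω)).sum_comp F, Fintype.sum_prod_type]
  rfl

noncomputable def wtFin (P : Matrix Ω Ω ℝ) (s : Ω) {n : ℕ} (z : Fin (n+1) → Ω) : ℝ :=
  (if z 0 = s then 1 else 0) * ∏ i : Fin n, P (z i.castSucc) (z i.succ)

lemma indprod_cons {n : ℕ} (Q : ℕ → Set Ω) (a : Ω) (w : Fin (n+1) → Ω) :
    (∏ i : Fin (n+2), Set.indicator (Q i) (1 : Ω → ℝ) (Fin.cons (α := fun _ => Ω) a w i)) =
      Set.indicator (Q 0) (1 : Ω → ℝ) a *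
        ∏ i : Fin (n+1), Set.indicator (Q (i+1)) (1 : Ω → ℝ) (w i) := by
  rw [Fin.prod_univ_succ]
  refine congrArg₂ (· * ·) ?_ (Finset.prod_congr rfl fun i _ => ?_)
  · norm_num
  · rw [Fin.cons_succ]; norm_num

lemma wtFin_cons {n : ℕ} (P : Matrix Ω Ω ℝ) (s : Ω) (a : Ω) (w : Fin (n+1) → Ω) :
    wtFin P s (Fin.cons a w) =
      (if a = s then 1 else 0) * (P a (w 0) * ∏ i : Fin n, P (w i.castSucc) (w i.succ)) := by
  unfold wtFin
  simp only [Fin.cons_zero, Fin.prod_univ_succ, Fin.castSucc_zero, Fin.cons_succ,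
    ← Fin.succ_castSucc, mul_assoc]

lemma indicator_const_mul (S : Set Ω) (s : Ω) (r : ℝ) :
    Set.indicator S (fun _ => r) s = Set.indicator S (1 : Ω → ℝ) s * r := by
  by_cases h : s ∈ S
  · simp [Set.indicator_of_mem h]
  · simp [Set.indicator_of_notMem h]

lemma sum_wt_eq_mass (P : Matrix Ω Ω ℝ) (Q : ℕ → Set Ω) (n : ℕ) (s : Ω) :
    ∑ z : Fin (n+1) → Ω,
      (∏ i : Fin (n+1), Set.indicator (Q (i : ℕ)) (1 : Ω → ℝ) (z i)) * wtFin P s z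
      = mass P Q n s := by
  induction n generalizing Q s with
  | zero =>
      rw [← ((Equiv.funUnique (Fin 1) Ω).symm).sum_comp]
      simp only [wtFin, Fin.prod_univ_one, Fin.prod_univ_zero, mul_one, Equiv.funUnique_symm_apply]
      rw [mass_zero]
      simp [mul_ite, mul_one, mul_zero]
      exact (Finset.sum_eq_single s (fun b _ hb => by simp [hb]) (by simp)).trans (by simp)
  | succ n ih =>
      rw [sum_fun_succ]
      simp only [indprod_cons, wtFin_cons]
      have key : ∀ a : Ω,
          ∑ w : Fin (n+1) → Ω,
            (∏ i : Fin (n+1), Set.indicator (Q ((i : ℕ)+1)) (1 : Ω → ℝ) (w i)) *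
              (P a (w 0) * ∏ i : Fin n, P (w i.castSucc) (w i.succ))
          = ∑ z, P a z * mass P (fun i => Q (i+1)) n z := by
        intro a
        have hih : ∀ z : Ω, mass P (fun i => Q (i+1)) n z =
            ∑ w : Fin (n+1) → Ω,
              (∏ i : Fin (n+1), Set.indicator (Q ((i : ℕ)+1)) (1 : Ω → ℝ) (w i)) * wtFin P z w :=
          fun z => (ih (fun i => Q (i+1)) z).symm
        simp only [hih, Finset.mul_sum, wtFin]
        rw [Finset.sum_comm]
        refine Finset.sum_congr rfl fun w _ => ?_
        rw [Finset.sum_congr rfl (fun z (_ : z ∈ Finset.univ) => show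
          P a z * ((∏ i : Fin (n+1), Set.indicator (Q ((i : ℕ)+1)) (1 : Ω → ℝ) (w i)) *
            ((if w 0 = z then 1 else 0) * ∏ i : Fin n, P (w i.castSucc) (w i.succ)))
          = (if w 0 = z then
              (∏ i : Fin (n+1), Set.indicator (Q ((i : ℕ)+1)) (1 : Ω → ℝ) (w i)) *
                (P a z * ∏ i : Fin n, P (w i.castSucc) (w i.succ)) else 0) by
            by_cases h : w 0 = z <;> simp [h] <;> ring)]
        rw [Finset.sum_ite_eq]
        simp
      have step : ∀ a : Ω,
          (∑ w : Fin (n+1) → Ω,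
            (Set.indicator (Q 0) (1:Ω→ℝ) a *
              ∏ i : Fin (n+1), Set.indicator (Q ((i:ℕ)+1)) (1:Ω→ℝ) (w i)) *
              ((if a = s then 1 else 0) *
                (P a (w 0) * ∏ i : Fin n, P (w i.castSucc) (w i.succ))))
          = if a = s then Set.indicator (Q 0) (1:Ω→ℝ) a *
              ∑ z, P a z * mass P (fun i => Q (i+1)) n z else 0 := by
        intro a
        by_cases h : a = s
        · subst h
          simp only [eq_self_iff_true, if_true, one_mul]
          rw [← key a, Finset.mul_sum]
          exact Finset.sum_congr rfl fun w _ => by ring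
        · simp [h]
      simp only [step]
      rw [Finset.sum_ite_eq' Finset.univ s]
      simp only [Finset.mem_univ, if_true, mass_succ]
      rw [indicator_const_mul]


lemma wtFin_nonneg {P : Matrix Ω Ω ℝ} (hP0 : ∀ x y, 0 ≤ P x y) (s : Ω) {n : ℕ}
    (z : Fin (n+1) → Ω) : 0 ≤ wtFin P s z := by
  unfold wtFin
  refine mul_nonneg (by positivity) (Finset.prod_nonneg fun i _ => hP0 _ _)

lemma indprod_nonneg {n : ℕ} (Q : ℕ → Set Ω) (z : Fin (n+1) → Ω) :
    0 ≤ ∏ i : Fin (n+1), Set.indicator (Q (i : ℕ)) (1 : Ω → ℝ) (z i) :=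
  Finset.prod_nonneg fun i _ => Set.indicator_nonneg (fun _ _ => zero_le_one) _

noncomputable def extFin {n : ℕ} (z : Fin (n+1) → Ω) : ℕ → Ω :=
  fun i => z ⟨min i n, Nat.lt_succ_of_le (min_le_right _ _)⟩

lemma extFin_of_le {n : ℕ} (z : Fin (n+1) → Ω) {i : ℕ} (h : i ≤ n) :
    extFin z i = z ⟨i, Nat.lt_succ_of_le h⟩ := by
  unfold extFin
  congr 1
  exact Fin.ext (Nat.min_eq_left h)

section Measure

open MeasureTheory

variable [MeasurableSpace Ω] {P : Matrix Ω Ω ℝ} {x₀ : Ω} {μ : Measure (ℕ → Ω)}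

variable (hμ : ∀ (n : ℕ) (z : ℕ → Ω),
    μ {ω | ∀ i ≤ n, ω i = z i} =
      ENNReal.ofReal ((if z 0 = x₀ then (1 : ℝ) else 0) *
        ∏ i ∈ Finset.range n, P (z i) (z (i + 1))))

include hμ

lemma mu_cyl {n : ℕ} (z : Fin (n+1) → Ω) :
    μ {ω | ∀ i ≤ n, ω i = extFin z i} = ENNReal.ofReal (wtFin P x₀ z) := by
  rw [hμ n (extFin z)]
  congr 1
  unfold wtFin
  congr 1
  · rw [← Fin.prod_univ_eq_prod_range]
    refine Finset.prod_congr rfl fun i _ => ?_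
    rw [extFin_of_le z (le_of_lt i.isLt), extFin_of_le z (Nat.succ_le_of_lt i.isLt)]
    congr 1 <;> exact congrArg z (Fin.ext rfl)

lemma measure_rect_le (hP0 : ∀ x y, 0 ≤ P x y) (Q : ℕ → Set Ω) (n : ℕ) :
    μ {ω | ∀ i ≤ n, ω i ∈ Q i} ≤ ENNReal.ofReal (mass P Q n x₀) := by
  classical
  set E : (Fin (n+1) → Ω) → Set (ℕ → Ω) := fun z =>
    if (∀ i : Fin (n+1), z i ∈ Q (i : ℕ)) then {ω | ∀ i ≤ n, ω i = extFin z i} else ∅ with hE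
  have hcover : {ω | ∀ i ≤ n, ω i ∈ Q i} ⊆ ⋃ z, E z := by
    intro ω hω
    refine Set.mem_iUnion.mpr ⟨fun i => ω (i : ℕ), ?_⟩
    rw [hE]
    simp only
    have hcond : ∀ i : Fin (n+1), ω (i : ℕ) ∈ Q (i : ℕ) :=
      fun i => hω (i : ℕ) (Nat.lt_succ_iff.mp i.isLt)
    rw [if_pos hcond]
    intro i hi
    rw [extFin_of_le _ hi]
  have hle : ∀ z, μ (E z) ≤ ENNReal.ofReal
      ((∏ i : Fin (n+1), Set.indicator (Q (i : ℕ)) (1 : Ω → ℝ) (z i)) * wtFin P x₀ z) := by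
    intro z
    rw [hE]
    simp only
    split_ifs with h
    · rw [mu_cyl hμ z]
      have : (∏ i : Fin (n+1), Set.indicator (Q (i : ℕ)) (1 : Ω → ℝ) (z i)) = 1 :=
        Finset.prod_eq_one fun i _ => by
          rw [Set.indicator_of_mem (h i)]; rfl
      rw [this, one_mul]
    · simp
  calc μ {ω | ∀ i ≤ n, ω i ∈ Q i} ≤ μ (⋃ z, E z) := measure_mono hcover
    _ ≤ ∑' z, μ (E z) := measure_iUnion_le E
    _ ≤ ∑' z, ENNReal.ofReal
        ((∏ i : Fin (n+1), Set.indicator (Q (i : ℕ)) (1 : Ω → ℝ) (z i)) * wtFin P x₀ z) :=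
        ENNReal.tsum_le_tsum hle
    _ = ∑ z : Fin (n+1) → Ω, ENNReal.ofReal
        ((∏ i : Fin (n+1), Set.indicator (Q (i : ℕ)) (1 : Ω → ℝ) (z i)) * wtFin P x₀ z) :=
        tsum_fintype _
    _ = ENNReal.ofReal (∑ z : Fin (n+1) → Ω,
        (∏ i : Fin (n+1), Set.indicator (Q (i : ℕ)) (1 : Ω → ℝ) (z i)) * wtFin P x₀ z) := by
        rw [ENNReal.ofReal_sum_of_nonneg fun z _ =>
          mul_nonneg (indprod_nonneg Q z) (wtFin_nonneg hP0 x₀ z)]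
    _ = ENNReal.ofReal (mass P Q n x₀) := by rw [sum_wt_eq_mass]

lemma measure_rect_compl_le (hP0 : ∀ x y, 0 ≤ P x y)
    (hP1 : ∀ x, ∑ y, P x y = 1) (Q : ℕ → Set Ω) (n : ℕ) :
    μ {ω | ∀ i ≤ n, ω i ∈ Q i}ᶜ ≤ ENNReal.ofReal (1 - mass P Q n x₀) := by
  classical
  set R := {ω : ℕ → Ω | ∀ i ≤ n, ω i ∈ Q i} with hR
  have hcompl : Rᶜ ⊆ ⋃ j : Fin (n+1), {ω | ∀ i ≤ n, ω i ∈ Qfail Q (j : ℕ) i} := by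
    intro ω hω
    have hex : ∃ j, ω j ∉ Q j := by
      by_contra hco
      push_neg at hco
      exact hω fun i _ => hco i
    obtain ⟨i₀, hi₀n, hi₀⟩ : ∃ i₀, i₀ ≤ n ∧ ω i₀ ∉ Q i₀ := by
      rw [hR] at hω
      simp only [Set.mem_compl_iff, Set.mem_setOf_eq, not_forall] at hω
      obtain ⟨i₀, hi, h⟩ := hω
      exact ⟨i₀, hi, h⟩
    have hfind : Nat.find hex ≤ n := le_trans (Nat.find_min' hex hi₀) hi₀n
    refine Set.mem_iUnion.mpr ⟨⟨Nat.find hex, Nat.lt_succ_of_le hfind⟩, fun i hi => ?_⟩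
    simp only [Qfail]
    split_ifs with h1 h2
    · by_contra hc
      exact Nat.find_min hex h1 hc
    · rw [h2]
      exact Nat.find_spec hex
    · trivial
  have h2 : μ Rᶜ ≤ ENNReal.ofReal (∑ j ∈ Finset.range (n+1), mass P (Qfail Q j) n x₀) := by
    calc μ Rᶜ ≤ ∑' j : Fin (n+1), μ {ω | ∀ i ≤ n, ω i ∈ Qfail Q (j : ℕ) i} :=
        le_trans (measure_mono hcompl) (measure_iUnion_le _)
      _ = ∑ j : Fin (n+1), μ {ω | ∀ i ≤ n, ω i ∈ Qfail Q (j : ℕ) i} := tsum_fintype _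
      _ ≤ ∑ j : Fin (n+1), ENNReal.ofReal (mass P (Qfail Q (j : ℕ)) n x₀) :=
        Finset.sum_le_sum fun j _ => measure_rect_le hμ hP0 _ n
      _ = ∑ j ∈ Finset.range (n+1), ENNReal.ofReal (mass P (Qfail Q j) n x₀) :=
        Fin.sum_univ_eq_sum_range (fun j => ENNReal.ofReal (mass P (Qfail Q j) n x₀)) (n+1)
      _ = ENNReal.ofReal (∑ j ∈ Finset.range (n+1), mass P (Qfail Q j) n x₀) :=
        (ENNReal.ofReal_sum_of_nonneg fun j _ => mass_nonneg hP0 _ n x₀).symm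
  have hfail : ∑ j ∈ Finset.range (n+1), mass P (Qfail Q j) n x₀ = 1 - mass P Q n x₀ := by
    have := mass_add_fail hP1 Q n x₀
    linarith
  rwa [hfail] at h2

lemma le_measure_rect [IsProbabilityMeasure μ] (hP0 : ∀ x y, 0 ≤ P x y)
    (hP1 : ∀ x, ∑ y, P x y = 1) (Q : ℕ → Set Ω) (n : ℕ) :
    ENNReal.ofReal (mass P Q n x₀) ≤ μ {ω | ∀ i ≤ n, ω i ∈ Q i} := by
  classical
  set R := {ω : ℕ → Ω | ∀ i ≤ n, ω i ∈ Q i} with hR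
  have hcompl : Rᶜ ⊆ ⋃ j : Fin (n+1), {ω | ∀ i ≤ n, ω i ∈ Qfail Q (j : ℕ) i} := by
    intro ω hω
    have hex : ∃ j, ω j ∉ Q j := by
      by_contra hco
      push_neg at hco
      exact hω fun i _ => hco i
    obtain ⟨i₀, hi₀n, hi₀⟩ : ∃ i₀, i₀ ≤ n ∧ ω i₀ ∉ Q i₀ := by
      rw [hR] at hω
      simp only [Set.mem_compl_iff, Set.mem_setOf_eq, not_forall] at hω
      obtain ⟨i₀, hi, h⟩ := hω
      exact ⟨i₀, hi, h⟩
    have hfind : Nat.find hex ≤ n := le_trans (Nat.find_min' hex hi₀) hi₀n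
    refine Set.mem_iUnion.mpr ⟨⟨Nat.find hex, Nat.lt_succ_of_le hfind⟩, fun i hi => ?_⟩
    simp only [Qfail]
    split_ifs with h1 h2
    · by_contra hc
      exact Nat.find_min hex h1 hc
    · rw [h2]
      exact Nat.find_spec hex
    · trivial
  have h2 : μ Rᶜ ≤ ENNReal.ofReal (∑ j ∈ Finset.range (n+1), mass P (Qfail Q j) n x₀) := by
    calc μ Rᶜ ≤ ∑' j : Fin (n+1), μ {ω | ∀ i ≤ n, ω i ∈ Qfail Q (j : ℕ) i} :=
        le_trans (measure_mono hcompl) (measure_iUnion_le _)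
      _ = ∑ j : Fin (n+1), μ {ω | ∀ i ≤ n, ω i ∈ Qfail Q (j : ℕ) i} := tsum_fintype _
      _ ≤ ∑ j : Fin (n+1), ENNReal.ofReal (mass P (Qfail Q (j : ℕ)) n x₀) :=
        Finset.sum_le_sum fun j _ => measure_rect_le hμ hP0 _ n
      _ = ∑ j ∈ Finset.range (n+1), ENNReal.ofReal (mass P (Qfail Q j) n x₀) :=
        Fin.sum_univ_eq_sum_range (fun j => ENNReal.ofReal (mass P (Qfail Q j) n x₀)) (n+1)
      _ = ENNReal.ofReal (∑ j ∈ Finset.range (n+1), mass P (Qfail Q j) n x₀) :=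
        (ENNReal.ofReal_sum_of_nonneg fun j _ => mass_nonneg hP0 _ n x₀).symm
  have hfail : ∑ j ∈ Finset.range (n+1), mass P (Qfail Q j) n x₀ = 1 - mass P Q n x₀ := by
    have := mass_add_fail hP1 Q n x₀
    linarith
  rw [hfail] at h2
  have hone : (1 : ℝ≥0∞) ≤ μ R + μ Rᶜ := by
    rw [← measure_univ (μ := μ), ← Set.union_compl_self R]
    exact measure_union_le R Rᶜ
  have hone' : (1 : ℝ≥0∞) ≤ μ R + ENNReal.ofReal (1 - mass P Q n x₀) :=
    le_trans hone (add_le_add le_rfl h2)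
  have hsum : ENNReal.ofReal (mass P Q n x₀) + ENNReal.ofReal (1 - mass P Q n x₀) = 1 := by
    rw [← ENNReal.ofReal_add (mass_nonneg hP0 Q n x₀)
      (by linarith [mass_le_one hP0 hP1 Q n x₀])]
    norm_num
  refine (ENNReal.add_le_add_iff_right (a := ENNReal.ofReal (1 - mass P Q n x₀))
    ENNReal.ofReal_ne_top).mp ?_
  rw [hsum]
  exact hone'

end Measure


section Chain

variable (P : Matrix Ω Ω ℝ) (C : Set Ω) (x : Ω) (B : Set Ω)

noncomputable def sC (n : ℕ) (y : Ω) : ℝ := mass P (fun _ => Cᶜ) n y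

def Qf (m : ℕ) : ℕ → Set Ω := fun i => if i < m then Cᶜ ∩ {x}ᶜ else Cᶜ ∩ {x}

noncomputable def fM (m : ℕ) (y : Ω) : ℝ := mass P (Qf C x m) m y

noncomputable def bB (n : ℕ) (y : Ω) : ℝ := mass P (fun _ => Bᶜ) n y

variable {P C x B}

lemma sC_zero (y : Ω) : sC P C 0 y = Set.indicator Cᶜ (1 : Ω → ℝ) y := rfl

lemma sC_succ (n : ℕ) (y : Ω) :
    sC P C (n+1) y = Set.indicator Cᶜ (fun _ => ∑ z, P y z * sC P C n z) y := rfl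

lemma bB_zero (y : Ω) : bB P B 0 y = Set.indicator Bᶜ (1 : Ω → ℝ) y := rfl

lemma bB_succ (n : ℕ) (y : Ω) :
    bB P B (n+1) y = Set.indicator Bᶜ (fun _ => ∑ z, P y z * bB P B n z) y := rfl

lemma fM_zero (y : Ω) : fM P C x 0 y = Set.indicator (Cᶜ ∩ {x}) (1 : Ω → ℝ) y := by
  unfold fM
  rw [mass_zero, show Qf C x 0 0 = Cᶜ ∩ {x} from by simp [Qf]]

lemma Qf_shift (m : ℕ) : (fun i => Qf C x (m+1) (i+1)) = Qf C x m := by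
  funext i
  simp only [Qf, Nat.add_lt_add_iff_right]

lemma fM_succ (m : ℕ) (y : Ω) :
    fM P C x (m+1) y =
      Set.indicator (Cᶜ ∩ {x}ᶜ) (fun _ => ∑ z, P y z * fM P C x m z) y := by
  unfold fM
  rw [mass_succ, Qf_shift, show Qf C x (m+1) 0 = Cᶜ ∩ {x}ᶜ from by simp [Qf]]

variable (hP0 : ∀ x y, 0 ≤ P x y) (hP1 : ∀ x, ∑ y, P x y = 1)
include hP0

lemma sC_nonneg (n : ℕ) (y : Ω) : 0 ≤ sC P C n y := mass_nonneg hP0 _ n y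
lemma bB_nonneg (n : ℕ) (y : Ω) : 0 ≤ bB P B n y := mass_nonneg hP0 _ n y
lemma fM_nonneg (m : ℕ) (y : Ω) : 0 ≤ fM P C x m y := mass_nonneg hP0 _ m y

omit hP0

lemma fM_succ_self (m : ℕ) : fM P C x (m+1) x = 0 := by
  rw [fM_succ]
  exact Set.indicator_of_notMem (by simp) _

lemma fM_eq_zero_of_mem (hxC : x ∈ C) (m : ℕ) (y : Ω) : fM P C x m y = 0 := by
  induction m generalizing y with
  | zero =>
      rw [fM_zero]
      exact Set.indicator_of_notMem (fun h => h.1 (by rcases h.2; exact hxC)) _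
  | succ m ih =>
      rw [fM_succ]
      by_cases h : y ∈ Cᶜ ∩ {x}ᶜ
      · rw [Set.indicator_of_mem h]
        simp [ih]
      · rw [Set.indicator_of_notMem h]

include hP0

lemma bB_of_mem {z : Ω} (hz : z ∈ B) (n : ℕ) : bB P B n z = 0 := by
  cases n with
  | zero =>
      rw [bB_zero]
      exact Set.indicator_of_notMem (Set.notMem_compl_iff.mpr hz) _
  | succ n =>
      rw [bB_succ]
      exact Set.indicator_of_notMem (Set.notMem_compl_iff.mpr hz) _

/-- the key concatenation inequality -/
lemma sum_fM_sC_le (N : ℕ) (y : Ω) :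
    ∑ m ∈ Finset.range (N+1), fM P C x m y * sC P C (N - m) x ≤ sC P C N y := by
  induction N generalizing y with
  | zero =>
      rw [Finset.range_one, Finset.sum_singleton, Nat.sub_zero]
      by_cases h : y ∈ Cᶜ ∩ {x}
      · rcases h.2
        rw [fM_zero, Set.indicator_of_mem h]
        simp
      · rw [fM_zero, Set.indicator_of_notMem h]
        simpa using sC_nonneg (C := C) hP0 0 y
  | succ N ih =>
      by_cases hyx : y = x
      · rw [hyx]
        have hz : ∀ m ∈ Finset.range (N+2), m ≠ 0 →
            fM P C x m x * sC P C (N + 1 - m) x = 0 := by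
          intro m _ hm
          obtain ⟨m', rfl⟩ := Nat.exists_eq_succ_of_ne_zero hm
          rw [fM_succ_self]
          ring
        rw [Finset.sum_eq_single_of_mem 0 (Finset.mem_range.mpr (Nat.succ_pos _)) hz,
          Nat.sub_zero, fM_zero]
        by_cases h : x ∈ Cᶜ ∩ {x}
        · rw [Set.indicator_of_mem h]
          simp
        · rw [Set.indicator_of_notMem h]
          simpa using sC_nonneg (C := C) hP0 (N+1) x
      · rw [Finset.sum_range_succ']
        have h0 : fM P C x 0 y * sC P C (N + 1 - 0) x = 0 := by
          rw [fM_zero, Set.indicator_of_notMem (fun h => hyx (by rcases h.2; rfl))]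
          ring
        rw [h0, add_zero]
        by_cases hy : y ∈ Cᶜ ∩ {x}ᶜ
        · have hrw : ∀ m, fM P C x (m+1) y = ∑ z, P y z * fM P C x m z := by
            intro m
            rw [fM_succ, Set.indicator_of_mem hy]
          calc ∑ m ∈ Finset.range (N+1), fM P C x (m+1) y * sC P C (N + 1 - (m+1)) x
              = ∑ m ∈ Finset.range (N+1), ∑ z, P y z * (fM P C x m z * sC P C (N - m) x) := by
                refine Finset.sum_congr rfl fun m _ => ?_
                rw [hrw, Nat.succ_sub_succ, Finset.sum_mul]
                exact Finset.sum_congr rfl fun z _ => by ring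
            _ = ∑ z, P y z * ∑ m ∈ Finset.range (N+1), fM P C x m z * sC P C (N - m) x := by
                rw [Finset.sum_comm]
                exact Finset.sum_congr rfl fun z _ => by rw [Finset.mul_sum]
            _ ≤ ∑ z, P y z * sC P C N z := by
                refine Finset.sum_le_sum fun z _ => ?_
                exact mul_le_mul_of_nonneg_left (ih z) (hP0 _ _)
            _ = sC P C (N+1) y := by
                rw [sC_succ, Set.indicator_of_mem hy.1]
        · have : ∀ m, fM P C x (m+1) y = 0 := by
            intro m
            rw [fM_succ, Set.indicator_of_notMem hy]
          simp only [this, zero_mul, Finset.sum_const_zero]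
          exact sC_nonneg (C := C) hP0 (N+1) y

omit hP0

/-- reachable from `x` along positive-probability edges avoiding `B` entirely -/
def Reach (P : Matrix Ω Ω ℝ) (x : Ω) (B : Set Ω) (y : Ω) : Prop :=
  ∃ (k : ℕ) (z : ℕ → Ω), z 0 = x ∧ z k = y ∧ (∀ i < k, 0 < P (z i) (z (i+1))) ∧
    (∀ i ≤ k, z i ∉ B)

variable (hbarrier : ∀ (k : ℕ) (z : ℕ → Ω), z 0 = x →
      (∀ i < k, 0 < P (z i) (z (i + 1))) → z k ∈ C → ∃ i ≤ k, z i ∈ B)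

include hbarrier

lemma reach_not_C {y : Ω} (h : Reach P x B y) : y ∉ C := by
  intro hyC
  obtain ⟨k, z, hz0, hzk, hpos, hnB⟩ := h
  obtain ⟨i, hik, hiB⟩ := hbarrier k z hz0 hpos (hzk ▸ hyC)
  exact hnB i hik hiB

omit hbarrier

lemma reach_not_B {y : Ω} (h : Reach P x B y) : y ∉ B := by
  obtain ⟨k, z, _, hzk, _, hnB⟩ := h
  exact hzk ▸ hnB k le_rfl

lemma reach_extend {y z' : Ω} (h : Reach P x B y) (hpos : 0 < P y z') (hz' : z' ∉ B) :
    Reach P x B z' := by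
  obtain ⟨k, z, hz0, hzk, hp, hnB⟩ := h
  refine ⟨k+1, fun i => if i ≤ k then z i else z', by simp [hz0], by simp, ?_, ?_⟩
  · intro i hi
    rcases Nat.lt_or_ge i k with h1 | h1
    · simpa [Nat.le_of_lt h1, Nat.succ_le_of_lt h1] using hp i h1
    · have : i = k := by omega
      subst this
      simpa [Nat.le_refl, Nat.not_succ_le_self, hzk] using hpos
  · intro i hi
    by_cases h2 : i ≤ k
    · simpa [h2] using hnB i h2
    · simpa [h2] using hz'

lemma reach_self (hxB : x ∉ B) : Reach P x B x :=
  ⟨0, fun _ => x, rfl, rfl, by omega, fun i _ => hxB⟩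

include hP0 hbarrier

lemma bB_le_sC (n : ℕ) {y : Ω} (hy : Reach P x B y) :
    bB P B n y ≤ sC P C n y := by
  induction n generalizing y with
  | zero =>
      rw [bB_zero, sC_zero, Set.indicator_of_mem (Set.mem_compl (reach_not_B hy)),
        Set.indicator_of_mem (Set.mem_compl (reach_not_C hbarrier hy))]
  | succ n ih =>
      rw [bB_succ, sC_succ, Set.indicator_of_mem (Set.mem_compl (reach_not_B hy)),
        Set.indicator_of_mem (Set.mem_compl (reach_not_C hbarrier hy))]
      refine Finset.sum_le_sum fun z _ => ?_
      rcases (hP0 y z).eq_or_lt with h | h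
      · rw [← h, zero_mul, zero_mul]
      · by_cases hzB : z ∈ B
        · rw [bB_of_mem hP0 hzB, mul_zero]
          exact mul_nonneg (le_of_lt h) (sC_nonneg hP0 _ _)
        · exact mul_le_mul_of_nonneg_left (ih (reach_extend hy h hzB)) (le_of_lt h)

omit hP0 hbarrier

noncomputable def gre (P : Matrix Ω Ω ℝ) (x : Ω) (B : Set Ω) : ℕ → Ω → ℝ
  | 0, _ => 0
  | n+1, y => Set.indicator Bᶜ
      (fun _ => (if y = x then 1 else 0) + ∑ z, P y z * gre P x B n z) y

lemma gre_zero (y : Ω) : gre P x B 0 y = 0 := rfl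

lemma gre_succ (n : ℕ) (y : Ω) :
    gre P x B (n+1) y = Set.indicator Bᶜ
      (fun _ => (if y = x then 1 else 0) + ∑ z, P y z * gre P x B n z) y := rfl

include hP0

lemma gre_nonneg (n : ℕ) (y : Ω) : 0 ≤ gre P x B n y := by
  induction n generalizing y with
  | zero => exact le_of_eq rfl
  | succ n ih =>
      rw [gre_succ]
      by_cases h : y ∈ Bᶜ
      · rw [Set.indicator_of_mem h]
        exact add_nonneg (by positivity) (Finset.sum_nonneg fun z _ =>
          mul_nonneg (hP0 _ _) (ih z))
      · rw [Set.indicator_of_notMem h]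

lemma gre_mono (n : ℕ) (y : Ω) : gre P x B n y ≤ gre P x B (n+1) y := by
  induction n generalizing y with
  | zero => rw [gre_zero]; exact gre_nonneg hP0 1 y
  | succ n ih =>
      rw [gre_succ, gre_succ]
      by_cases h : y ∈ Bᶜ
      · rw [Set.indicator_of_mem h, Set.indicator_of_mem h]
        exact add_le_add le_rfl (Finset.sum_le_sum fun z _ =>
          mul_le_mul_of_nonneg_left (ih z) (hP0 _ _))
      · rw [Set.indicator_of_notMem h, Set.indicator_of_notMem h]

lemma gre_le_of_le {n m : ℕ} (h : n ≤ m) (y : Ω) : gre P x B n y ≤ gre P x B m y := by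
  induction m with
  | zero => rw [Nat.le_zero.mp h]
  | succ m ih =>
      rcases Nat.lt_or_ge n (m+1) with h1 | h1
      · exact le_trans (ih (Nat.lt_succ_iff.mp h1)) (gre_mono hP0 m y)
      · rw [Nat.le_antisymm h h1]

include hP1

lemma gre_le_x (n : ℕ) (y : Ω) : gre P x B n y ≤ gre P x B n x := by
  induction n generalizing y with
  | zero => exact le_of_eq rfl
  | succ n ih =>
      by_cases hyx : y = x
      · rw [hyx]
      · rw [gre_succ]
        have hle : (fun _ : Ω => (if y = x then 1 else 0) + ∑ z, P y z * gre P x B n z) y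
            ≤ gre P x B n x := by
          simp only [if_neg hyx, zero_add]
          calc ∑ z, P y z * gre P x B n z ≤ ∑ z, P y z * gre P x B n x :=
              Finset.sum_le_sum fun z _ =>
                mul_le_mul_of_nonneg_left (ih z) (hP0 _ _)
            _ = gre P x B n x := by rw [← Finset.sum_mul, hP1, one_mul]
        by_cases h : y ∈ Bᶜ
        · rw [Set.indicator_of_mem h]
          exact le_trans hle (gre_mono hP0 n x)
        · rw [Set.indicator_of_notMem h]
          exact gre_nonneg hP0 _ _

lemma gre_sum_le_x (n : ℕ) (y : Ω) : ∑ z, P y z * gre P x B n z ≤ gre P x B n x := by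
  calc ∑ z, P y z * gre P x B n z ≤ ∑ z, P y z * gre P x B n x :=
      Finset.sum_le_sum fun z _ =>
        mul_le_mul_of_nonneg_left (gre_le_x hP0 hP1 n z) (hP0 _ _)
    _ = gre P x B n x := by rw [← Finset.sum_mul, hP1, one_mul]

omit hP1

lemma gre_le_sum_bB (n : ℕ) (y : Ω) :
    gre P x B n y ≤ ∑ k ∈ Finset.range n, bB P B k y := by
  induction n generalizing y with
  | zero => simp [gre_zero]
  | succ n ih =>
      by_cases h : y ∈ Bᶜ
      · rw [gre_succ, Set.indicator_of_mem h, Finset.sum_range_succ']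
        have h1 : (if y = x then (1:ℝ) else 0) ≤ bB P B 0 y := by
          rw [bB_zero, Set.indicator_of_mem h]
          split_ifs <;> norm_num
        have h2 : ∑ z, P y z * gre P x B n z ≤ ∑ k ∈ Finset.range n, bB P B (k+1) y := by
          calc ∑ z, P y z * gre P x B n z
              ≤ ∑ z, P y z * ∑ k ∈ Finset.range n, bB P B k z :=
                Finset.sum_le_sum fun z _ => mul_le_mul_of_nonneg_left (ih z) (hP0 _ _)
            _ = ∑ k ∈ Finset.range n, ∑ z, P y z * bB P B k z := by
                rw [Finset.sum_comm]
                exact Finset.sum_congr rfl fun z _ => Finset.mul_sum _ _ _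
            _ = ∑ k ∈ Finset.range n, bB P B (k+1) y := by
                refine Finset.sum_congr rfl fun k _ => ?_
                rw [bB_succ, Set.indicator_of_mem h]
        linarith
      · rw [gre_succ, Set.indicator_of_notMem h]
        exact Finset.sum_nonneg fun k _ => bB_nonneg hP0 k y

variable {pst : Ω → ℝ} (hpst0 : ∀ y, 0 ≤ pst y) (hpst1 : ∑ y, pst y = 1)
    (hstat : ∀ y, ∑ z, pst z * P z y = pst y)

include hP1 hpst0 hstat

lemma station_step (hxB : x ∉ B) (n : ℕ) :
    pst x + ∑ y, pst y * gre P x B n y ≤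
      (∑ y, pst y * gre P x B (n+1) y) +
        (∑ y, Set.indicator B pst y) * gre P x B n x := by
  set A : Ω → ℝ := fun y => (if y = x then 1 else 0) + ∑ z, P y z * gre P x B n z with hA
  have hsplit : ∀ y, pst y * A y =
      pst y * gre P x B (n+1) y + Set.indicator B (fun y => pst y * A y) y := by
    intro y
    by_cases hy : y ∈ B
    · rw [gre_succ, Set.indicator_of_notMem (Set.notMem_compl_iff.mpr hy),
        Set.indicator_of_mem hy]
      ring
    · rw [gre_succ, Set.indicator_of_mem (Set.mem_compl hy), Set.indicator_of_notMem hy]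
      ring
  have hE1 : ∑ y, pst y * A y = pst x + ∑ z, pst z * gre P x B n z := by
    rw [hA]
    simp only [mul_add]
    rw [Finset.sum_add_distrib]
    congr 1
    · simp [mul_ite, Finset.sum_ite_eq' Finset.univ x pst]
    · calc ∑ y, pst y * ∑ z, P y z * gre P x B n z
          = ∑ y, ∑ z, (pst y * P y z) * gre P x B n z := by
            refine Finset.sum_congr rfl fun y _ => ?_
            rw [Finset.mul_sum]
            exact Finset.sum_congr rfl fun z _ => by ring
        _ = ∑ z, (∑ y, pst y * P y z) * gre P x B n z := by
            rw [Finset.sum_comm]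
            exact Finset.sum_congr rfl fun z _ => (Finset.sum_mul _ _ _).symm
        _ = ∑ z, pst z * gre P x B n z := by
            exact Finset.sum_congr rfl fun z _ => by rw [hstat]
  have hE3 : ∑ y, Set.indicator B (fun y => pst y * A y) y ≤
      (∑ y, Set.indicator B pst y) * gre P x B n x := by
    rw [Finset.sum_mul]
    refine Finset.sum_le_sum fun y _ => ?_
    by_cases hy : y ∈ B
    · rw [Set.indicator_of_mem hy, Set.indicator_of_mem hy, hA]
      have hyx : y ≠ x := fun h => hxB (h ▸ hy)
      simp only [if_neg hyx, zero_add]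
      exact mul_le_mul_of_nonneg_left (gre_sum_le_x hP0 hP1 n y) (hpst0 y)
    · rw [Set.indicator_of_notMem hy, Set.indicator_of_notMem hy, zero_mul]
  have hsum := Finset.sum_congr rfl (fun y (_ : y ∈ Finset.univ) => hsplit y)
  rw [Finset.sum_add_distrib] at hsum
  linarith [hE1, hE3, hsum]

lemma telescope (hxB : x ∉ B) (N : ℕ) :
    (N:ℝ) * pst x ≤ (∑ y, pst y * gre P x B N y) +
      (∑ y, Set.indicator B pst y) * ∑ n ∈ Finset.range N, gre P x B n x := by
  induction N with
  | zero => simp [gre_zero]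
  | succ N ih =>
      have hstep := station_step hP0 hP1 hpst0 hstat hxB N
      rw [Finset.sum_range_succ, mul_add]
      push_cast
      linarith

include hpst1 in
lemma key_real (hxB : x ∉ B) (N : ℕ) :
    (N:ℝ) * pst x ≤ gre P x B N x +
      (∑ y, Set.indicator B pst y) * ((N:ℝ) * gre P x B N x) := by
  have h1 := telescope hP0 hP1 hpst0 hstat hxB N
  have h2 : ∑ y, pst y * gre P x B N y ≤ gre P x B N x := by
    calc ∑ y, pst y * gre P x B N y ≤ ∑ y, pst y * gre P x B N x :=
        Finset.sum_le_sum fun y _ =>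
          mul_le_mul_of_nonneg_left (gre_le_x hP0 hP1 N y) (hpst0 y)
      _ = gre P x B N x := by rw [← Finset.sum_mul, hpst1, one_mul]
  have h3 : ∑ n ∈ Finset.range N, gre P x B n x ≤ (N:ℝ) * gre P x B N x := by
    calc ∑ n ∈ Finset.range N, gre P x B n x
        ≤ ∑ n ∈ Finset.range N, gre P x B N x :=
          Finset.sum_le_sum fun n hn =>
            gre_le_of_le hP0 (le_of_lt (Finset.mem_range.mp hn)) x
      _ = (N:ℝ) * gre P x B N x := by
          rw [Finset.sum_const, Finset.card_range, nsmul_eq_mul]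
  have hpB : 0 ≤ ∑ y, Set.indicator B pst y :=
    Finset.sum_nonneg fun y _ => Set.indicator_nonneg (fun y _ => hpst0 y) y
  have h4 := mul_le_mul_of_nonneg_left h3 hpB
  linarith

end Chain

lemma hitTime_le {Ω : Type*} {A : Set Ω} {ω : ℕ → Ω} {n : ℕ} (h : ω n ∈ A) :
    hitTime A ω ≤ n :=
  iInf_le_of_le n (by rw [iInf_pos h])

lemma le_hitTime {Ω : Type*} {A : Set Ω} {ω : ℕ → Ω} {n : ℕ}
    (h : ∀ i < n, ω i ∉ A) : (n : ℝ≥0∞) ≤ hitTime A ω := by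
  refine le_iInf fun i => le_iInf fun hi => ?_
  have hni : n ≤ i := not_lt.mp (fun hlt => h i hlt hi)
  exact_mod_cast Nat.cast_le.mpr hni

lemma hitTime_eq_top {Ω : Type*} {A : Set Ω} {ω : ℕ → Ω} (h : ∀ i, ω i ∉ A) :
    hitTime A ω = ⊤ := by
  unfold hitTime
  simp [h]

lemma hit_event_eq {C : Set Ω} {x : Ω} :
    {ω : ℕ → Ω | hitTime {x} ω < hitTime C ω} =
      ⋃ m : ℕ, {ω : ℕ → Ω | ∀ i ≤ m, ω i ∈ Qf C x m i} := by
  classical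
  ext ω
  simp only [Set.mem_setOf_eq, Set.mem_iUnion]
  constructor
  · intro h
    have hx : ∃ i, ω i ∈ ({x} : Set Ω) := by
      by_contra hco
      push_neg at hco
      rw [hitTime_eq_top hco] at h
      exact not_top_lt h
    set m := Nat.find hx with hmdef
    have hxm : ω m ∈ ({x} : Set Ω) := Nat.find_spec hx
    have hmin : ∀ i < m, ω i ∉ ({x} : Set Ω) := fun i hi => Nat.find_min hx hi
    have hge : (m : ℝ≥0∞) ≤ hitTime {x} ω := le_hitTime hmin
    have hCm : ∀ i ≤ m, ω i ∉ C := by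
      intro i hi hiC
      have h1 : hitTime C ω ≤ (i : ℝ≥0∞) := hitTime_le hiC
      have h2 : hitTime C ω ≤ (m : ℝ≥0∞) := h1.trans (Nat.cast_le.mpr hi)
      exact absurd (lt_of_le_of_lt hge (lt_of_lt_of_le h h2)) (lt_irrefl _)
    refine ⟨m, fun i hi => ?_⟩
    simp only [Qf]
    split_ifs with h1
    · exact ⟨hCm i hi, hmin i h1⟩
    · have h2 : i = m := by omega
      rw [h2]
      exact ⟨hCm m le_rfl, hxm⟩
  · intro ⟨m, hm⟩
    have hxm : ω m ∈ ({x} : Set Ω) := by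
      have := hm m le_rfl
      simp only [Qf, lt_irrefl, if_neg (lt_irrefl m)] at this
      exact this.2
    have hC : ∀ i ≤ m, ω i ∉ C := by
      intro i hi hiC
      have := hm i hi
      simp only [Qf] at this
      split_ifs at this with h1
      · exact this.1 hiC
      · exact this.1 hiC
    calc hitTime {x} ω ≤ (m : ℝ≥0∞) := hitTime_le hxm
      _ < ((m+1 : ℕ) : ℝ≥0∞) := by exact_mod_cast Nat.lt_succ_self m
      _ ≤ hitTime C ω := le_hitTime (fun i hi => hC i (Nat.lt_succ_iff.mp hi))

lemma conv_lower (f s : ℕ → ℝ) (hf : ∀ m, 0 ≤ f m) (hs : ∀ j, 0 ≤ s j) (M K : ℕ) :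
    (∑ m ∈ Finset.range M, f m) * (∑ j ∈ Finset.range K, s j) ≤
      ∑ N ∈ Finset.range (M+K), ∑ m ∈ Finset.range (N+1), f m * s (N - m) := by
  classical
  have hinj : ∀ p ∈ (Finset.range M) ×ˢ (Finset.range K),
      ∀ p' ∈ (Finset.range M) ×ˢ (Finset.range K),
      (fun p : ℕ×ℕ => (p.1 + p.2, p.1)) p = (fun p : ℕ×ℕ => (p.1 + p.2, p.1)) p' →
        p = p' := by
    intro p _ p' _ h
    simp only [Prod.mk.injEq] at h
    exact Prod.ext h.2 (by omega)
  have hrhs : ∑ N ∈ Finset.range (M+K), ∑ m ∈ Finset.range (N+1), f m * s (N - m)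
      = ∑ q ∈ ((Finset.range (M+K)) ×ˢ (Finset.range (M+K))).filter
          (fun q : ℕ×ℕ => q.2 ≤ q.1), f q.2 * s (q.1 - q.2) := by
    rw [Finset.sum_filter, Finset.sum_product]
    refine Finset.sum_congr rfl fun N hN => ?_
    rw [← Finset.sum_filter]
    refine (Finset.sum_congr ?_ fun m _ => rfl).symm
    ext m
    simp only [Finset.mem_filter, Finset.mem_range]
    rw [Finset.mem_range] at hN
    omega
  have himg : (∑ m ∈ Finset.range M, f m) * (∑ j ∈ Finset.range K, s j)
      = ∑ q ∈ ((Finset.range M) ×ˢ (Finset.range K)).image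
          (fun p : ℕ×ℕ => (p.1 + p.2, p.1)), f q.2 * s (q.1 - q.2) := by
    rw [Finset.sum_image hinj, Finset.sum_mul_sum, ← Finset.sum_product']
    refine Finset.sum_congr rfl fun p _ => ?_
    simp [Nat.add_sub_cancel_left]
  rw [himg, hrhs]
  refine Finset.sum_le_sum_of_subset_of_nonneg ?_ fun q _ _ => mul_nonneg (hf _) (hs _)
  intro q hq
  simp only [Finset.mem_image, Finset.mem_product, Finset.mem_range] at hq
  obtain ⟨p, ⟨hp1, hp2⟩, rfl⟩ := hq
  simp only [Finset.mem_filter, Finset.mem_product, Finset.mem_range]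
  omega

lemma sum_ite_lt_le (t : ℝ≥0∞)
    (hnat : ∀ n : ℕ, (n:ℝ≥0∞) < t → ((n+1:ℕ):ℝ≥0∞) ≤ t) (K : ℕ) :
    ∑ n ∈ Finset.range K, (if (n:ℝ≥0∞) < t then (1:ℝ≥0∞) else 0) ≤ t := by
  induction K with
  | zero => simp
  | succ K ih =>
      rw [Finset.sum_range_succ]
      by_cases hKt : (K:ℝ≥0∞) < t
      · have hall : ∀ n ∈ Finset.range K, (if (n:ℝ≥0∞) < t then (1:ℝ≥0∞) else 0) = 1 := by
          intro n hn
          exact if_pos (lt_of_le_of_lt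
            (Nat.cast_le.mpr (le_of_lt (Finset.mem_range.mp hn))) hKt)
        have hKsum : (∑ n ∈ Finset.range K, if (n:ℝ≥0∞) < t then (1:ℝ≥0∞) else 0)
            = (K : ℝ≥0∞) := by
          rw [Finset.sum_congr rfl hall, Finset.sum_const, Finset.card_range,
            nsmul_eq_mul, mul_one]
        rw [hKsum, if_pos hKt]
        calc (K:ℝ≥0∞) + 1 = ((K+1:ℕ):ℝ≥0∞) := by push_cast; rfl
          _ ≤ t := hnat K hKt
      · rw [if_neg hKt, add_zero]
        exact ih

section Main

open MeasureTheory

theorem main_recipe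
    [Nonempty Ω] [MeasurableSpace Ω]
    (P : Matrix Ω Ω ℝ)
    (hP0 : ∀ x y, 0 ≤ P x y) (hP1 : ∀ x, ∑ y, P x y = 1)
    (pst : Ω → ℝ) (hpst0 : ∀ x, 0 ≤ pst x) (hpst1 : ∑ x, pst x = 1)
    (hstat : ∀ y, ∑ x, pst x * P x y = pst y)
    (x₀ : Ω) (μ : Measure (ℕ → Ω)) [IsProbabilityMeasure μ]
    (hμ : ∀ (n : ℕ) (z : ℕ → Ω),
      μ {ω | ∀ i ≤ n, ω i = z i} =
        ENNReal.ofReal ((if z 0 = x₀ then (1 : ℝ) else 0) *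
          ∏ i ∈ Finset.range n, P (z i) (z (i + 1))))
    (c : ℝ) (hc : 0 < c) (x : Ω) (C : Set Ω)
    (hhit : ENNReal.ofReal c ≤ μ {ω | hitTime {x} ω < hitTime C ω})
    (B : Set Ω)
    (hbarrier : ∀ (k : ℕ) (z : ℕ → Ω), z 0 = x →
      (∀ i < k, 0 < P (z i) (z (i + 1))) → z k ∈ C → ∃ i ≤ k, z i ∈ B) :
    ENNReal.ofReal (c * pst x) / ENNReal.ofReal (∑ y, Set.indicator B pst y) ≤
      ∫⁻ ω, hitTime C ω ∂μ := by
  classical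
  set pB := ∑ y, Set.indicator B pst y with hpBdef
  have hpB0 : 0 ≤ pB :=
    Finset.sum_nonneg fun y _ => Set.indicator_nonneg (fun y _ => hpst0 y) y
  -- Step 1 : good measurable subsets of the survival events
  have hDn : ∀ n : ℕ, ∃ D : Set (ℕ → Ω), MeasurableSet D ∧
      (∀ ω ∈ D, ∀ i ≤ n, ω i ∉ C) ∧ ENNReal.ofReal (sC P C n x₀) ≤ μ D := by
    intro n
    set A := {ω : ℕ → Ω | ∀ i ≤ n, ω i ∈ (fun _ : ℕ => Cᶜ) i} with hA
    obtain ⟨S, hsub, hSm, hSμ⟩ := MeasureTheory.exists_measurable_superset μ Aᶜ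
    refine ⟨Sᶜ, hSm.compl, ?_, ?_⟩
    · intro ω hω i hi
      exact (Set.compl_subset_comm.mp hsub) hω i hi
    · have hμS : μ S ≤ ENNReal.ofReal (1 - sC P C n x₀) := by
        rw [hSμ]
        exact measure_rect_compl_le hμ hP0 hP1 _ n
      have hDc : μ Sᶜ = 1 - μ S := by
        rw [measure_compl hSm (measure_ne_top μ S), measure_univ]
      rw [hDc]
      have hsum : ENNReal.ofReal (sC P C n x₀) + ENNReal.ofReal (1 - sC P C n x₀) = 1 := by
        have h1 : sC P C n x₀ ≤ 1 := mass_le_one hP0 hP1 (fun _ : ℕ => Cᶜ) n x₀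
        rw [← ENNReal.ofReal_add (sC_nonneg hP0 _ _) (by linarith)]
        norm_num
      calc ENNReal.ofReal (sC P C n x₀)
          = 1 - ENNReal.ofReal (1 - sC P C n x₀) := by
            rw [← hsum, ENNReal.add_sub_cancel_right ENNReal.ofReal_ne_top]
        _ ≤ 1 - μ S := tsub_le_tsub_left hμS 1
  choose D hDm hDsub hDle using hDn
  have hT0 : ∀ K : ℕ, ENNReal.ofReal (∑ n ∈ Finset.range K, sC P C n x₀) ≤
      ∫⁻ ω, hitTime C ω ∂μ := by
    intro K
    have hgle : ∀ ω, (∑ n ∈ Finset.range K, (D n).indicator (fun _ => (1:ℝ≥0∞)) ω)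
        ≤ hitTime C ω := by
      intro ω
      have hnat : ∀ n : ℕ, (n:ℝ≥0∞) < hitTime C ω →
          ((n+1:ℕ):ℝ≥0∞) ≤ hitTime C ω := by
        intro n hn
        refine le_hitTime fun i hi hiC => ?_
        have h1 : hitTime C ω ≤ i := hitTime_le hiC
        have h2 : (i:ℝ≥0∞) ≤ (n:ℝ≥0∞) := Nat.cast_le.mpr (Nat.lt_succ_iff.mp hi)
        exact absurd (lt_of_le_of_lt (h1.trans h2) hn) (lt_irrefl _)
      have hterm : ∀ n, (D n).indicator (fun _ => (1:ℝ≥0∞)) ω ≤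
          (if (n:ℝ≥0∞) < hitTime C ω then 1 else 0) := by
        intro n
        by_cases h : ω ∈ D n
        · rw [Set.indicator_of_mem h]
          have h1 : ((n+1 : ℕ) : ℝ≥0∞) ≤ hitTime C ω :=
            le_hitTime (fun i hi => hDsub n ω h i (Nat.lt_succ_iff.mp hi))
          have h2 : (n : ℝ≥0∞) < hitTime C ω :=
            lt_of_lt_of_le (by exact_mod_cast Nat.lt_succ_self n) h1
          rw [if_pos h2]
        · rw [Set.indicator_of_notMem h]
          exact zero_le
      exact le_trans (Finset.sum_le_sum fun n _ => hterm n)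
        (sum_ite_lt_le _ hnat K)
    have hg : ∫⁻ ω, (∑ n ∈ Finset.range K, (D n).indicator (fun _ => (1:ℝ≥0∞)) ω) ∂μ
        = ∑ n ∈ Finset.range K, μ (D n) := by
      rw [MeasureTheory.lintegral_finset_sum _
        (fun n _ => measurable_const.indicator (hDm n))]
      refine Finset.sum_congr rfl fun n _ => ?_
      rw [MeasureTheory.lintegral_indicator (hDm n) _, MeasureTheory.setLIntegral_const,
        one_mul]
    calc ENNReal.ofReal (∑ n ∈ Finset.range K, sC P C n x₀)
        = ∑ n ∈ Finset.range K, ENNReal.ofReal (sC P C n x₀) :=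
          ENNReal.ofReal_sum_of_nonneg fun n _ => sC_nonneg hP0 n x₀
      _ ≤ ∑ n ∈ Finset.range K, μ (D n) := Finset.sum_le_sum fun n _ => hDle n
      _ = ∫⁻ ω, (∑ n ∈ Finset.range K, (D n).indicator (fun _ => (1:ℝ≥0∞)) ω) ∂μ := hg.symm
      _ ≤ ∫⁻ ω, hitTime C ω ∂μ := lintegral_mono hgle
  -- Step 2 : lower bound on the hitting probability by word masses
  have hR : ENNReal.ofReal c ≤ ∑' m : ℕ, ENNReal.ofReal (fM P C x m x₀) := by
    refine le_trans hhit ?_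
    rw [hit_event_eq]
    exact le_trans (measure_iUnion_le _)
      (ENNReal.tsum_le_tsum fun m => measure_rect_le (P := P) hμ hP0 (Qf C x m) m)
  -- Step 3
  set Tx := ⨆ K : ℕ, ENNReal.ofReal (∑ n ∈ Finset.range K, sC P C n x) with hTxdef
  have hstep3 : ENNReal.ofReal c * Tx ≤ ∫⁻ ω, hitTime C ω ∂μ := by
    have hMK : ∀ M K : ℕ,
        (∑ m ∈ Finset.range M, ENNReal.ofReal (fM P C x m x₀)) *
          ENNReal.ofReal (∑ n ∈ Finset.range K, sC P C n x) ≤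
          ∫⁻ ω, hitTime C ω ∂μ := by
      intro M K
      have hreal : (∑ m ∈ Finset.range M, fM P C x m x₀) *
          (∑ n ∈ Finset.range K, sC P C n x) ≤
          ∑ N ∈ Finset.range (M+K), sC P C N x₀ := by
        calc (∑ m ∈ Finset.range M, fM P C x m x₀) * (∑ n ∈ Finset.range K, sC P C n x)
            ≤ ∑ N ∈ Finset.range (M+K), ∑ m ∈ Finset.range (N+1),
                fM P C x m x₀ * sC P C (N - m) x :=
              conv_lower _ _ (fun m => fM_nonneg hP0 m x₀) (fun j => sC_nonneg hP0 j x) M K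
          _ ≤ ∑ N ∈ Finset.range (M+K), sC P C N x₀ :=
              Finset.sum_le_sum fun N _ => sum_fM_sC_le hP0 N x₀
      calc (∑ m ∈ Finset.range M, ENNReal.ofReal (fM P C x m x₀)) *
            ENNReal.ofReal (∑ n ∈ Finset.range K, sC P C n x)
          = ENNReal.ofReal ((∑ m ∈ Finset.range M, fM P C x m x₀) *
              (∑ n ∈ Finset.range K, sC P C n x)) := by
            rw [← ENNReal.ofReal_sum_of_nonneg fun m _ => fM_nonneg hP0 m x₀,
              ← ENNReal.ofReal_mul (Finset.sum_nonneg fun m _ => fM_nonneg hP0 m x₀)]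
        _ ≤ ENNReal.ofReal (∑ N ∈ Finset.range (M+K), sC P C N x₀) :=
            ENNReal.ofReal_le_ofReal hreal
        _ ≤ ∫⁻ ω, hitTime C ω ∂μ := hT0 (M+K)
    calc ENNReal.ofReal c * Tx ≤ (∑' m : ℕ, ENNReal.ofReal (fM P C x m x₀)) * Tx :=
        mul_le_mul_left hR _
      _ ≤ ∫⁻ ω, hitTime C ω ∂μ := by
          rw [ENNReal.tsum_eq_iSup_nat, ENNReal.iSup_mul]
          refine iSup_le fun M => ?_
          rw [hTxdef, ENNReal.mul_iSup]
          exact iSup_le fun K => hMK M K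
  -- Step 4 : impossible that x ∈ C
  by_cases hxC : x ∈ C
  · exfalso
    have hzero : ∑' m : ℕ, ENNReal.ofReal (fM P C x m x₀) = 0 := by
      have : ∀ m : ℕ, ENNReal.ofReal (fM P C x m x₀) = 0 := by
        intro m
        rw [fM_eq_zero_of_mem hxC m x₀]
        exact ENNReal.ofReal_zero
      simp [this]
    rw [hzero] at hR
    exact absurd (lt_of_lt_of_le (ENNReal.ofReal_pos.mpr hc) hR) (lt_irrefl 0)
  have hsC0 : sC P C 0 x = 1 := by
    rw [sC_zero, Set.indicator_of_mem (Set.mem_compl hxC)]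
    rfl
  have hTx1 : 1 ≤ Tx := by
    refine le_iSup_of_le 1 ?_
    rw [Finset.sum_range_one, hsC0]
    norm_num
  by_cases hxB : x ∈ B
  · -- easy case : x ∈ B
    have hpx_le : pst x ≤ pB := by
      rw [hpBdef, ← Set.indicator_of_mem hxB pst]
      exact Finset.single_le_sum
        (fun y _ => Set.indicator_nonneg (fun y _ => hpst0 y) y) (Finset.mem_univ x)
    have hgoal_le : ENNReal.ofReal (c * pst x) / ENNReal.ofReal pB ≤ ENNReal.ofReal c := by
      refine ENNReal.div_le_of_le_mul ?_
      rw [← ENNReal.ofReal_mul hc.le]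
      exact ENNReal.ofReal_le_ofReal (mul_le_mul_of_nonneg_left hpx_le hc.le)
    calc ENNReal.ofReal (c * pst x) / ENNReal.ofReal pB ≤ ENNReal.ofReal c := hgoal_le
      _ = ENNReal.ofReal c * 1 := (mul_one _).symm
      _ ≤ ENNReal.ofReal c * Tx := mul_le_mul_right hTx1 _
      _ ≤ ∫⁻ ω, hitTime C ω ∂μ := hstep3
  · -- main case : x ∉ B
    set Tb := ⨆ N : ℕ, ENNReal.ofReal (∑ k ∈ Finset.range N, bB P B k x) with hTbdef
    have hTbTx : Tb ≤ Tx := by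
      refine iSup_le fun N => le_iSup_of_le N ?_
      refine ENNReal.ofReal_le_ofReal (Finset.sum_le_sum fun k _ => ?_)
      exact bB_le_sC hP0 hbarrier k (reach_self hxB)
    have hdivTb : ENNReal.ofReal (c * pst x) / ENNReal.ofReal pB ≤
        ENNReal.ofReal c * Tb := by
      by_cases hTbtop : Tb = ⊤
      · rw [hTbtop, ENNReal.mul_top (ENNReal.ofReal_pos.mpr hc).ne']
        exact le_top
      · set t := Tb.toReal with htdef
        have ht0 : 0 ≤ t := ENNReal.toReal_nonneg
        have htb_le : ∀ N, ∑ k ∈ Finset.range N, bB P B k x ≤ t := by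
          intro N
          have h1 : ENNReal.ofReal (∑ k ∈ Finset.range N, bB P B k x) ≤ Tb := by
            rw [hTbdef]
            exact le_iSup (fun N => ENNReal.ofReal (∑ k ∈ Finset.range N, bB P B k x)) N
          calc ∑ k ∈ Finset.range N, bB P B k x
              = (ENNReal.ofReal (∑ k ∈ Finset.range N, bB P B k x)).toReal :=
                (ENNReal.toReal_ofReal
                  (Finset.sum_nonneg fun k _ => bB_nonneg hP0 k x)).symm
            _ ≤ t := ENNReal.toReal_mono hTbtop h1
        have hkey : ∀ N : ℕ, (N:ℝ) * pst x ≤ t + pB * ((N:ℝ) * t) := by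
          intro N
          have h1 := key_real hP0 hP1 hpst0 hpst1 hstat hxB N
          have h2 : gre P x B N x ≤ t :=
            le_trans (gre_le_sum_bB hP0 N x) (htb_le N)
          have h3 : (N:ℝ) * gre P x B N x ≤ (N:ℝ) * t :=
            mul_le_mul_of_nonneg_left h2 (Nat.cast_nonneg N)
          have h4 : pB * ((N:ℝ) * gre P x B N x) ≤ pB * ((N:ℝ) * t) :=
            mul_le_mul_of_nonneg_left h3 hpB0
          linarith
        have hfinal : pst x ≤ pB * t := by
          by_contra hcon
          push_neg at hcon
          set ε := pst x - pB * t with hεdef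
          have hε0 : 0 < ε := by simp only [hεdef]; linarith
          obtain ⟨N, hN⟩ := exists_nat_gt (t / ε)
          have := hkey N
          have hring : pB * ((N:ℝ) * t) = (N:ℝ) * (pB * t) := by ring
          have hNε : (N:ℝ) * ε ≤ t := by
            have hexp : (N:ℝ) * ε = (N:ℝ) * pst x - (N:ℝ) * (pB * t) := by
              rw [hεdef]; ring
            rw [hexp]
            linarith [this, hring]
          have ht_lt : t < (N:ℝ) * ε := by
            rw [div_lt_iff₀ hε0] at hN
            linarith
          linarith
        refine ENNReal.div_le_of_le_mul ?_
        calc ENNReal.ofReal (c * pst x) ≤ ENNReal.ofReal (c * (pB * t)) :=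
            ENNReal.ofReal_le_ofReal (mul_le_mul_of_nonneg_left hfinal hc.le)
          _ = ENNReal.ofReal c * ENNReal.ofReal t * ENNReal.ofReal pB := by
              rw [ENNReal.ofReal_mul hc.le, ENNReal.ofReal_mul hpB0]
              ring
          _ = (ENNReal.ofReal c * Tb) * ENNReal.ofReal pB := by
              rw [htdef, ENNReal.ofReal_toReal hTbtop]
    calc ENNReal.ofReal (c * pst x) / ENNReal.ofReal pB ≤ ENNReal.ofReal c * Tb := hdivTb
      _ ≤ ENNReal.ofReal c * Tx := mul_le_mul_right hTbTx _
      _ ≤ ∫⁻ ω, hitTime C ω ∂μ := hstep3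

end Main

end HTLB

/-- **Recipe for hitting time lower bounds (general statement).**
For an irreducible aperiodic Markov chain with stationary distribution `π` started at `x₀`:
if the chain hits the state `x` before the set `C` with probability at least `c`, and every
path from `x` to `C` (through edges of positive transition probability) meets the barrier
set `B`, then `E[τ_C] ≥ c·π(x)/π(B)`. -/
theorem hitting_time_lower_bound_recipe
    {Ω : Type*} [Fintype Ω] [DecidableEq Ω] [Nonempty Ω] [MeasurableSpace Ω]
    (P : Matrix Ω Ω ℝ)
    (hP0 : ∀ x y, 0 ≤ P x y) (hP1 : ∀ x, ∑ y, P x y = 1)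
    (hirr : ∀ x y : Ω, ∃ t : ℕ, 0 < (P ^ t) x y)
    (haper : ∀ x : Ω, ∀ d : ℕ,
      (∀ t : ℕ, 1 ≤ t → 0 < (P ^ t) x x → d ∣ t) → d ∣ 1)
    (pst : Ω → ℝ) (hpst0 : ∀ x, 0 ≤ pst x) (hpst1 : ∑ x, pst x = 1)
    (hstat : ∀ y, ∑ x, pst x * P x y = pst y)
    (x₀ : Ω) (μ : Measure (ℕ → Ω)) [IsProbabilityMeasure μ]
    (hμ : IsMarkovChain P x₀ μ)
    (c : ℝ) (hc : 0 < c) (x : Ω) (C : Set Ω) (hCne : C.Nonempty)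
    (hhit : ENNReal.ofReal c ≤ μ {ω | hitTime {x} ω < hitTime C ω})
    (B : Set Ω)
    (hbarrier : ∀ (k : ℕ) (z : ℕ → Ω), z 0 = x →
      (∀ i < k, 0 < P (z i) (z (i + 1))) → z k ∈ C → ∃ i ≤ k, z i ∈ B) :
    ENNReal.ofReal (c * pst x) / ENNReal.ofReal (∑ y, Set.indicator B pst y) ≤
      ∫⁻ ω, hitTime C ω ∂μ := by
  exact HTLB.main_recipe P hP0 hP1 pst hpst0 hpst1 hstat x₀ μ
    (fun n z => hμ n z) c hc x C hhit B hbarrier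
end

section
/- Let (Ω, c) be a network whose associated graph (an edge between distinct u and v whenever c(u,v) > 0) is connected, and let a, x, z ∈ Ω be pairwise distinct states such that c(u, z) = 0 for all u ∉ {x, z}. Suppose there is a sequence of states x = x₀, x₁, …, x_k = a and a constant ρ > 0 such that c(x_{i−1}, x_i) ≥ ρ^{−1}·c(x, z) for i = 1, …, k. Then the Markov chain associated with the network, started at x, satisfies P{τ_a < τ_z | X₀ = x} ≥ 1/(kρ + 1). -/
open MeasureTheory
open scoped ENNReal
open Finset

namespace HPPaux

variable {Ω : Type*} [Fintype Ω] [DecidableEq Ω]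

/-- Dirichlet energy. -/
noncomputable def en (c : Ω → Ω → ℝ) (v : Ω → ℝ) : ℝ := ∑ u, ∑ w, c u w * (v u - v w)^2

lemma exists_harmonic (c : Ω → Ω → ℝ) (hsymm : ∀ u v, c u v = c v u)
    (hnonneg : ∀ u v, 0 ≤ c u v) (a z : Ω) (haz : a ≠ z) :
    ∃ v : Ω → ℝ, v a = 1 ∧ v z = 0 ∧ (∀ u, v u ∈ Set.Icc (0:ℝ) 1) ∧
      (∀ u, u ≠ a → u ≠ z → ∑ w, c u w * (v u - v w) = 0) := by
  classical
  set K : Set (Ω → ℝ) :=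
    (Set.univ.pi fun _ => Set.Icc (0:ℝ) 1) ∩ ((fun v => v a) ⁻¹' {1} ∩ (fun v => v z) ⁻¹' {0})
    with hKdef
  have hKc : IsCompact K :=
    (isCompact_univ_pi fun _ => isCompact_Icc).inter_right
      ((isClosed_singleton.preimage (continuous_apply a)).inter
        (isClosed_singleton.preimage (continuous_apply z)))
  have hKne : K.Nonempty := by
    refine ⟨fun u => if u = a then 1 else 0, ?_, ?_, ?_⟩
    · intro u _
      by_cases h : u = a <;> simp [h]
    · simp
    · simp [haz.symm]
  have hcont : Continuous (en c) := by
    apply continuous_finset_sum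
    intro u _
    apply continuous_finset_sum
    intro w _
    exact continuous_const.mul (((continuous_apply u).sub (continuous_apply w)).pow 2)
  obtain ⟨v, hvK, hmin⟩ := hKc.exists_isMinOn hKne hcont.continuousOn
  obtain ⟨hvIcc, hva, hvz⟩ := hvK
  simp only [Set.mem_preimage, Set.mem_singleton_iff] at hva hvz
  have hIcc : ∀ u, v u ∈ Set.Icc (0:ℝ) 1 := fun u => hvIcc u (Set.mem_univ u)
  refine ⟨v, hva, hvz, hIcc, ?_⟩
  intro u hua huz
  set χ : Ω → ℝ := fun w => if w = u then 1 else 0 with hχ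
  set ℓ : ℝ := ∑ w, c u w * (v u - v w) with hℓ
  set Q : ℝ := ∑ u', ∑ w, c u' w * (χ u' - χ w)^2 with hQ
  have hQ0 : 0 ≤ Q := Finset.sum_nonneg fun u' _ => Finset.sum_nonneg fun w _ =>
    mul_nonneg (hnonneg u' w) (sq_nonneg _)
  -- perturbation identity
  have hS1 : (∑ u', χ u' * ∑ w, c u' w * (v u' - v w)) = ℓ := by
    have h1 : ∀ u' : Ω, (χ u' * ∑ w, c u' w * (v u' - v w))
        = if u' = u then (∑ w, c u' w * (v u' - v w)) else 0 := by
      intro u'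
      simp only [hχ]
      split <;> simp
    rw [Finset.sum_congr rfl fun u' _ => h1 u', Finset.sum_ite_eq' Finset.univ u]
    simp [hℓ]
  have hS2 : (∑ u', ∑ w, χ w * (c u' w * (v u' - v w))) = -ℓ := by
    rw [Finset.sum_comm]
    have h1 : ∀ w : Ω, (∑ u', χ w * (c u' w * (v u' - v w)))
        = if w = u then (∑ u', c u' w * (v u' - v w)) else 0 := by
      intro w
      simp only [hχ]
      split <;> simp
    rw [Finset.sum_congr rfl fun w _ => h1 w, Finset.sum_ite_eq' Finset.univ u]
    simp only [Finset.mem_univ, if_true, hℓ, ← Finset.sum_neg_distrib]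
    refine Finset.sum_congr rfl fun u' _ => ?_
    rw [hsymm u u']
    ring
  have key : ∀ t : ℝ, en c (fun w => v w + t * χ w) = en c v + 4 * t * ℓ + t^2 * Q := by
    intro t
    have expand : en c (fun w => v w + t * χ w)
        = ∑ u', ∑ w, (c u' w * (v u' - v w)^2
          + (2 * t) * (χ u' * (c u' w * (v u' - v w)) - χ w * (c u' w * (v u' - v w)))
          + t^2 * (c u' w * (χ u' - χ w)^2)) := by
      unfold en
      refine Finset.sum_congr rfl fun u' _ => Finset.sum_congr rfl fun w _ => ?_
      ring
    rw [expand]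
    simp only [Finset.sum_add_distrib, Finset.sum_sub_distrib, ← Finset.mul_sum]
    rw [hS1, hS2]
    unfold en
    rw [hQ]
    ring
  -- now derive ℓ = 0 by contradiction
  by_contra hl
  rcases lt_or_gt_of_ne hl with hneg | hpos
  · -- ℓ < 0 : push v u up
    have hvu1 : v u < 1 := by
      rcases lt_or_eq_of_le (hIcc u).2 with h | h
      · exact h
      · exfalso
        have : 0 ≤ ℓ := Finset.sum_nonneg fun w _ => mul_nonneg (hnonneg u w)
          (by rw [h]; linarith [(hIcc w).2])
        linarith
    set s : ℝ := min (1 - v u) (-ℓ / (Q + 1)) with hs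
    have hs0 : 0 < s := lt_min (by linarith) (div_pos (by linarith) (by linarith))
    have hmem : (fun w => v w + s * χ w) ∈ K := by
      refine ⟨fun w _ => ?_, ?_, ?_⟩
      · by_cases h : w = u
        · subst h
          simp only [hχ, if_pos rfl, mul_one]
          constructor
          · linarith [(hIcc w).1]
          · have : s ≤ 1 - v w := min_le_left _ _
            linarith
        · simp only [hχ, if_neg h, mul_zero, add_zero]
          exact hIcc w
      · show v a + s * χ a ∈ ({1} : Set ℝ)
        simp [hχ, if_neg (Ne.symm hua), hva]
      · show v z + s * χ z ∈ ({0} : Set ℝ)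
        simp [hχ, if_neg (Ne.symm huz), hvz]
    have hle := hmin hmem
    have hkey := key s
    have hsQ : s * (s * Q) ≤ s * (-ℓ) := by
      have h1 : s * Q ≤ -ℓ := by
        have : s ≤ -ℓ / (Q + 1) := min_le_right _ _
        have h2 : s * (Q + 1) ≤ -ℓ := by
          rw [← div_mul_cancel₀ (-ℓ) (by positivity : (Q:ℝ) + 1 ≠ 0)]
          exact mul_le_mul_of_nonneg_right this (by positivity)
        nlinarith
      exact mul_le_mul_of_nonneg_left h1 (le_of_lt hs0)
    have : en c (fun w => v w + s * χ w) < en c v := by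
      rw [hkey]
      nlinarith
    simp only [IsMinOn, IsMinFilter] at hle
    exact absurd hle (by simpa using not_le.mpr this)
  · -- ℓ > 0 : push v u down
    have hvu0 : 0 < v u := by
      rcases lt_or_eq_of_le (hIcc u).1 with h | h
      · exact h
      · exfalso
        have : ℓ ≤ 0 := Finset.sum_nonpos fun w _ => mul_nonpos_of_nonneg_of_nonpos
          (hnonneg u w) (by rw [← h]; linarith [(hIcc w).1])
        linarith
    set s : ℝ := min (v u) (ℓ / (Q + 1)) with hs
    have hs0 : 0 < s := lt_min hvu0 (by positivity)
    have hmem : (fun w => v w + (-s) * χ w) ∈ K := by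
      refine ⟨fun w _ => ?_, ?_, ?_⟩
      · by_cases h : w = u
        · subst h
          simp only [hχ, if_pos rfl, mul_one]
          constructor
          · have : s ≤ v w := min_le_left _ _
            linarith
          · linarith [(hIcc w).2]
        · simp only [hχ, if_neg h, mul_zero, add_zero]
          exact hIcc w
      · show v a + (-s) * χ a ∈ ({1} : Set ℝ)
        simp [hχ, if_neg (Ne.symm hua), hva]
      · show v z + (-s) * χ z ∈ ({0} : Set ℝ)
        simp [hχ, if_neg (Ne.symm huz), hvz]
    have hle := hmin hmem
    have hkey := key (-s)
    have hsQ : s * (s * Q) ≤ s * ℓ := by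
      have h1 : s * Q ≤ ℓ := by
        have : s ≤ ℓ / (Q + 1) := min_le_right _ _
        have h2 : s * (Q + 1) ≤ ℓ := by
          rw [← div_mul_cancel₀ ℓ (by positivity : (Q:ℝ) + 1 ≠ 0)]
          exact mul_le_mul_of_nonneg_right this (by positivity)
        nlinarith
      exact mul_le_mul_of_nonneg_left h1 (le_of_lt hs0)
    have : en c (fun w => v w + (-s) * χ w) < en c v := by
      rw [hkey]
      nlinarith
    simp only [IsMinOn, IsMinFilter] at hle
    exact absurd hle (by simpa using not_le.mpr this)


lemma sum_d_zero (c : Ω → Ω → ℝ) (hsymm : ∀ u v, c u v = c v u) (v : Ω → ℝ) :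
    ∑ u, ∑ w, c u w * (v u - v w) = 0 := by
  have h : ∑ u, ∑ w, c u w * (v u - v w)
      = ∑ u, ∑ w, (c u w * v u - c u w * v w) := by
    refine Finset.sum_congr rfl fun u _ => Finset.sum_congr rfl fun w _ => by ring
  rw [h]
  simp only [Finset.sum_sub_distrib]
  have h2 : ∑ u : Ω, ∑ w : Ω, c u w * v w = ∑ u : Ω, ∑ w : Ω, c u w * v u := by
    rw [Finset.sum_comm]
    refine Finset.sum_congr rfl fun u _ => Finset.sum_congr rfl fun w _ => by rw [hsymm]
  rw [h2, sub_self]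

lemma energy_eq (c : Ω → Ω → ℝ) (hsymm : ∀ u v, c u v = c v u)
    (a x z : Ω) (haz : a ≠ z) (hxz : x ≠ z)
    (hz : ∀ u, u ≠ x → u ≠ z → c u z = 0) (v : Ω → ℝ) (hva : v a = 1) (hvz : v z = 0)
    (hharm : ∀ u, u ≠ a → u ≠ z → ∑ w, c u w * (v u - v w) = 0) :
    en c v = 2 * (c x z * v x) := by
  classical
  set d : Ω → ℝ := fun u => ∑ w, c u w * (v u - v w) with hd
  have step1 : en c v = 2 * ∑ u, v u * d u := by
    have h : en c v = ∑ u, ∑ w, (c u w * (v u - v w) * v u - c u w * (v u - v w) * v w) := by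
      unfold en
      refine Finset.sum_congr rfl fun u _ => Finset.sum_congr rfl fun w _ => by ring
    have hT2 : ∑ u : Ω, ∑ w : Ω, c u w * (v u - v w) * v w
        = - ∑ u : Ω, ∑ w : Ω, c u w * (v u - v w) * v u := by
      rw [Finset.sum_comm, ← Finset.sum_neg_distrib]
      refine Finset.sum_congr rfl fun u _ => ?_
      rw [← Finset.sum_neg_distrib]
      refine Finset.sum_congr rfl fun w _ => ?_
      rw [hsymm w u]
      ring
    rw [h]
    simp only [Finset.sum_sub_distrib]
    rw [hT2]
    have : ∑ u : Ω, v u * d u = ∑ u : Ω, ∑ w : Ω, c u w * (v u - v w) * v u := by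
      refine Finset.sum_congr rfl fun u _ => ?_
      rw [hd, Finset.mul_sum]
      exact Finset.sum_congr rfl fun w _ => by ring
    rw [this]
    ring
  have step2 : ∑ u, v u * d u = d a := by
    have h : ∀ u : Ω, v u * d u = if u = a then d a else 0 := by
      intro u
      by_cases hu : u = a
      · subst hu; simp [hva]
      · by_cases huz : u = z
        · subst huz; simp [hvz, hu]
        · rw [if_neg hu, hd]
          simp only []
          rw [hharm u hu huz, mul_zero]
    rw [Finset.sum_congr rfl fun u _ => h u, Finset.sum_ite_eq' Finset.univ a]
    simp
  have step3 : d a + d z = 0 := by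
    have h0 := sum_d_zero c hsymm v
    have h : ∀ u : Ω, d u = (if u = a then d a else 0) + (if u = z then d z else 0) := by
      intro u
      by_cases hu : u = a
      · subst hu; simp [if_neg haz]
      · by_cases huz : u = z
        · subst huz; simp [hu]
        · simp [hu, huz, hharm u hu huz, hd]
    have : ∑ u, d u = d a + d z := by
      rw [Finset.sum_congr rfl fun u _ => h u, Finset.sum_add_distrib,
        Finset.sum_ite_eq' Finset.univ a, Finset.sum_ite_eq' Finset.univ z]
      simp
    rw [← this]
    exact h0
  have step4 : d z = -(c x z * v x) := by
    have h : ∀ w : Ω, c z w * (v z - v w) = if w = x then -(c x z * v x) else 0 := by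
      intro w
      by_cases hw : w = x
      · subst hw; rw [if_pos rfl, hvz, hsymm z w]; ring
      · rw [if_neg hw]
        by_cases hwz : w = z
        · subst hwz; ring
        · rw [hsymm z w, hz w hw hwz]; ring
    rw [hd]
    simp only []
    rw [Finset.sum_congr rfl fun w _ => h w, Finset.sum_ite_eq' Finset.univ x]
    simp
  rw [step1, step2]
  linarith

lemma path_energy_le (c : Ω → Ω → ℝ) (hsymm : ∀ u v, c u v = c v u)
    (hnonneg : ∀ u v, 0 ≤ c u v) (v : Ω → ℝ) (m : ℕ) (Y : ℕ → Ω)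
    (hinj : Set.InjOn Y (Set.Iic (m+1))) :
    2 * ∑ i ∈ Finset.range (m+1), c (Y i) (Y (i+1)) * (v (Y (i+1)) - v (Y i))^2 ≤ en c v := by
  classical
  set F : Ω × Ω → ℝ := fun p => c p.1 p.2 * (v p.1 - v p.2)^2 with hF
  have hFnn : ∀ p : Ω × Ω, 0 ≤ F p := fun p => mul_nonneg (hnonneg _ _) (sq_nonneg _)
  have hen : en c v = ∑ p ∈ Finset.univ ×ˢ Finset.univ, F p := by
    rw [Finset.sum_product]
    rfl
  set S1 : Finset (Ω × Ω) := (Finset.range (m+1)).image (fun i => (Y i, Y (i+1))) with hS1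
  set S2 : Finset (Ω × Ω) := (Finset.range (m+1)).image (fun i => (Y (i+1), Y i)) with hS2
  have hmem : ∀ i, i ∈ Finset.range (m+1) → i ∈ Set.Iic (m+1) := by
    intro i hi
    simp only [Finset.mem_range] at hi
    exact Set.mem_Iic.mpr (by omega)
  have hmem' : ∀ i, i ∈ Finset.range (m+1) → i + 1 ∈ Set.Iic (m+1) := by
    intro i hi
    simp only [Finset.mem_range] at hi
    exact Set.mem_Iic.mpr (by omega)
  have hsum1 : ∑ p ∈ S1, F p
      = ∑ i ∈ Finset.range (m+1), c (Y i) (Y (i+1)) * (v (Y (i+1)) - v (Y i))^2 := by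
    rw [hS1, Finset.sum_image]
    · refine Finset.sum_congr rfl fun i _ => ?_
      simp only [hF]
      ring
    · intro i hi j hj hij
      have h1 : Y i = Y j := congrArg Prod.fst hij
      exact hinj (hmem i hi) (hmem j hj) h1
  have hsum2 : ∑ p ∈ S2, F p
      = ∑ i ∈ Finset.range (m+1), c (Y i) (Y (i+1)) * (v (Y (i+1)) - v (Y i))^2 := by
    rw [hS2, Finset.sum_image]
    · refine Finset.sum_congr rfl fun i _ => ?_
      simp only [hF]
      rw [hsymm]
    · intro i hi j hj hij
      have h1 : Y (i+1) = Y (j+1) := congrArg Prod.fst hij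
      have := hinj (hmem' i hi) (hmem' j hj) h1
      omega
  have hdisj : Disjoint S1 S2 := by
    rw [Finset.disjoint_left]
    intro p hp1 hp2
    rw [hS1, Finset.mem_image] at hp1
    rw [hS2, Finset.mem_image] at hp2
    obtain ⟨i, hi, hpi⟩ := hp1
    obtain ⟨j, hj, hpj⟩ := hp2
    have h1 : Y i = Y (j+1) := by rw [← hpj] at hpi; exact congrArg Prod.fst hpi
    have h2 : Y (i+1) = Y j := by rw [← hpj] at hpi; exact congrArg Prod.snd hpi
    have e1 := hinj (hmem i hi) (hmem' j hj) h1
    have e2 := hinj (hmem' i hi) (hmem j hj) h2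
    omega
  have hsub : S1 ∪ S2 ⊆ Finset.univ ×ˢ Finset.univ := by
    intro p _
    simp
  calc 2 * ∑ i ∈ Finset.range (m+1), c (Y i) (Y (i+1)) * (v (Y (i+1)) - v (Y i))^2
      = ∑ p ∈ S1 ∪ S2, F p := by
        rw [Finset.sum_union hdisj, hsum1, hsum2]; ring
    _ ≤ ∑ p ∈ Finset.univ ×ˢ Finset.univ, F p :=
        Finset.sum_le_sum_of_subset_of_nonneg hsub (fun p _ _ => hFnn p)
    _ = en c v := hen.symm

lemma cxz_pos (c : Ω → Ω → ℝ) (hsymm : ∀ u v, c u v = c v u) (x z : Ω) (hxz : x ≠ z)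
    (hz : ∀ u, u ≠ x → u ≠ z → c u z = 0)
    (m : ℕ) (w : ℕ → Ω) (h0 : w 0 = z) (hm : w m = x)
    (hw : ∀ i < m, 0 < c (w i) (w (i + 1))) : 0 < c x z := by
  classical
  have hPm : w m ≠ z := by rw [hm]; exact hxz
  have hex : ∃ i, w i ≠ z := ⟨m, hPm⟩
  have hiz : w (Nat.find hex) ≠ z := Nat.find_spec hex
  have him : Nat.find hex ≤ m := Nat.find_le hPm
  have hipos : Nat.find hex ≠ 0 := by
    intro h
    rw [h, h0] at hiz
    exact hiz rfl
  obtain ⟨i', hieq⟩ : ∃ i', Nat.find hex = i' + 1 := ⟨Nat.find hex - 1, by omega⟩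
  rw [hieq] at hiz him
  have hprev : w i' = z := by
    by_contra h
    exact Nat.find_min hex (show i' < Nat.find hex by omega) h
  have hedge : 0 < c (w i') (w (i' + 1)) := hw i' (by omega)
  rw [hprev] at hedge
  have hwx : w (i' + 1) = x := by
    by_contra h
    have := hz (w (i' + 1)) h hiz
    rw [hsymm] at this
    rw [this] at hedge
    exact lt_irrefl 0 hedge
  rw [hwx] at hedge
  rw [hsymm]
  exact hedge

lemma loop_erase (c : Ω → Ω → ℝ) (γ : ℝ) :
    ∀ k : ℕ, ∀ xs : ℕ → Ω, (∀ i < k, γ ≤ c (xs i) (xs (i+1))) →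
    ∃ m, m ≤ k ∧ ∃ ys : ℕ → Ω, ys 0 = xs 0 ∧ ys m = xs k ∧
      (∀ i < m, γ ≤ c (ys i) (ys (i+1))) ∧ Set.InjOn ys (Set.Iic m) := by
  intro k
  induction k using Nat.strong_induction_on with
  | _ k IH =>
    intro xs hxs
    by_cases hinj : Set.InjOn xs (Set.Iic k)
    · exact ⟨k, le_refl k, xs, rfl, rfl, hxs, hinj⟩
    · rw [Set.InjOn] at hinj
      push_neg at hinj
      obtain ⟨i₀, hi₀, j₀, hj₀, heq₀, hne₀⟩ := hinj
      rw [Set.mem_Iic] at hi₀ hj₀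
      obtain ⟨i, j, hij, hjk, heq⟩ : ∃ i j, i < j ∧ j ≤ k ∧ xs i = xs j := by
        rcases Nat.lt_or_ge i₀ j₀ with h | h
        · exact ⟨i₀, j₀, h, hj₀, heq₀⟩
        · exact ⟨j₀, i₀, by omega, hi₀, heq₀.symm⟩
      set d := j - i with hd
      set ys : ℕ → Ω := fun t => if t ≤ i then xs t else xs (t + d) with hys
      set k' := k - d with hk'
      have hdk : d ≤ k := by omega
      have hd1 : 1 ≤ d := by omega
      have hk'lt : k' < k := by omega
      have hys_edge : ∀ t < k', γ ≤ c (ys t) (ys (t+1)) := by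
        intro t ht
        by_cases h1 : t + 1 ≤ i
        · have h2 : t ≤ i := by omega
          simp only [hys, if_pos h1, if_pos h2]
          exact hxs t (by omega)
        · by_cases h2 : t ≤ i
          · have h3 : t = i := by omega
            simp only [hys, if_pos h2, if_neg h1]
            subst h3
            rw [heq]
            have : t + 1 + d = j + 1 := by omega
            rw [this]
            exact hxs j (by omega)
          · simp only [hys, if_neg h1, if_neg h2]
            have : t + d + 1 = t + 1 + d := by omega
            rw [← this]
            exact hxs (t + d) (by omega)
      obtain ⟨m, hm, ys', h0, hk, hedge, hinj'⟩ := IH k' hk'lt ys hys_edge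
      refine ⟨m, by omega, ys', ?_, ?_, hedge, hinj'⟩
      · rw [h0]
        simp only [hys]
        simp
      · rw [hk]
        simp only [hys]
        by_cases h : k' ≤ i
        · have hji : j = k := by omega
          have hki : k' = i := by omega
          rw [if_pos h, hki, heq, hji]
        · rw [if_neg h]
          congr 1
          omega

lemma harmonic_lowbound (c : Ω → Ω → ℝ) (hsymm : ∀ u v, c u v = c v u)
    (hnonneg : ∀ u v, 0 ≤ c u v)
    (a x z : Ω) (hax : a ≠ x) (haz : a ≠ z) (hxz : x ≠ z)
    (hz : ∀ u, u ≠ x → u ≠ z → c u z = 0) (hcxz : 0 < c x z)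
    (k : ℕ) (xs : ℕ → Ω) (hxs0 : xs 0 = x) (hxsk : xs k = a)
    (ρ : ℝ) (hρ : 0 < ρ)
    (hpath : ∀ i < k, ρ⁻¹ * c x z ≤ c (xs i) (xs (i + 1)))
    (v : Ω → ℝ) (hva : v a = 1) (hvz : v z = 0) (hIcc : ∀ u, v u ∈ Set.Icc (0:ℝ) 1)
    (hharm : ∀ u, u ≠ a → u ≠ z → ∑ w, c u w * (v u - v w) = 0) :
    1 / (k * ρ + 1) ≤ v x := by
  classical
  set γ : ℝ := ρ⁻¹ * c x z with hγdef
  have hγ : 0 < γ := by positivity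
  obtain ⟨m, hmk, ys, hy0, hym, hyedge, hyinj⟩ := loop_erase c γ k xs hpath
  rw [hxs0] at hy0
  rw [hxsk] at hym
  -- z is not on the simple path
  have hznot : ∀ t, t ≤ m → ys t ≠ z := by
    intro t htm hzt
    rcases Nat.eq_zero_or_pos t with h0 | hpos
    · rw [h0, hy0] at hzt; exact hxz hzt
    · have htm' : t ≠ m := by
        intro h; rw [h, hym] at hzt; exact haz hzt
      obtain ⟨t', rfl⟩ : ∃ t', t = t' + 1 := ⟨t - 1, by omega⟩
      have hedge : 0 < c (ys t') (ys (t' + 1)) := lt_of_lt_of_le hγ (hyedge t' (by omega))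
      rw [hzt] at hedge
      have hcases : ys t' = x ∨ ys t' = z := by
        by_contra h
        push_neg at h
        rw [hz (ys t') h.1 h.2] at hedge
        exact lt_irrefl 0 hedge
      rcases hcases with hx' | hz'
      · have h0' : ys t' = ys 0 := by rw [hx', hy0]
        have : t' = 0 := hyinj (Set.mem_Iic.mpr (by omega)) (Set.mem_Iic.mpr (by omega)) h0'
        subst this
        -- ys 1 = z, so need m ≥ 2 and derive contradiction on ys 2
        have hm2 : 2 ≤ m := by omega
        have hedge2 : 0 < c (ys 1) (ys 2) := lt_of_lt_of_le hγ (hyedge 1 (by omega))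
        rw [hzt] at hedge2
        have hcases2 : ys 2 = x ∨ ys 2 = z := by
          by_contra h
          push_neg at h
          have := hz (ys 2) h.1 h.2
          rw [hsymm] at this
          rw [this] at hedge2
          exact lt_irrefl 0 hedge2
        rcases hcases2 with h2 | h2
        · have : (2:ℕ) = 0 := hyinj (Set.mem_Iic.mpr (by omega)) (Set.mem_Iic.mpr (by omega))
            (by rw [h2, hy0])
          omega
        · have : (2:ℕ) = 1 := hyinj (Set.mem_Iic.mpr (by omega)) (Set.mem_Iic.mpr (by omega))
            (by rw [h2, ← hzt])
          omega
      · have : t' + 1 = t' := hyinj (Set.mem_Iic.mpr (by omega)) (Set.mem_Iic.mpr (by omega))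
          (by rw [hzt, hz'])
        omega
  -- extended path starting at z
  set Y : ℕ → Ω := fun t => if t = 0 then z else ys (t - 1) with hY
  have hY0 : Y 0 = z := by simp [hY]
  have hYsucc : ∀ t : ℕ, Y (t + 1) = ys t := by intro t; simp [hY]
  have hYm : Y (m + 1) = a := by rw [hYsucc, hym]
  have hYinj : Set.InjOn Y (Set.Iic (m + 1)) := by
    intro s hs t ht hst
    rw [Set.mem_Iic] at hs ht
    rcases Nat.eq_zero_or_pos s with hs0 | hs1 <;> rcases Nat.eq_zero_or_pos t with ht0 | ht1
    · omega
    · exfalso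
      subst hs0
      rw [hY0] at hst
      obtain ⟨t', rfl⟩ : ∃ t', t = t' + 1 := ⟨t - 1, by omega⟩
      rw [hYsucc] at hst
      exact hznot t' (by omega) hst.symm
    · exfalso
      subst ht0
      rw [hY0] at hst
      obtain ⟨s', rfl⟩ : ∃ s', s = s' + 1 := ⟨s - 1, by omega⟩
      rw [hYsucc] at hst
      exact hznot s' (by omega) hst
    · obtain ⟨s', rfl⟩ : ∃ s', s = s' + 1 := ⟨s - 1, by omega⟩
      obtain ⟨t', rfl⟩ : ∃ t', t = t' + 1 := ⟨t - 1, by omega⟩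
      rw [hYsucc, hYsucc] at hst
      have := hyinj (Set.mem_Iic.mpr (by omega)) (Set.mem_Iic.mpr (by omega)) hst
      omega
  set C : ℕ → ℝ := fun i => c (Y i) (Y (i + 1)) with hC
  set Δ : ℕ → ℝ := fun i => v (Y (i + 1)) - v (Y i) with hΔ
  have hC0 : C 0 = c x z := by
    simp only [hC, hY0, hYsucc, hy0]
    rw [hsymm]
  have hCpos : ∀ i ∈ Finset.range (m + 1), 0 < C i := by
    intro i hi
    rw [Finset.mem_range] at hi
    rcases Nat.eq_zero_or_pos i with h0 | h1
    · rw [h0, hC0]; exact hcxz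
    · obtain ⟨i', rfl⟩ : ∃ i', i = i' + 1 := ⟨i - 1, by omega⟩
      simp only [hC, hYsucc]
      exact lt_of_lt_of_le hγ (hyedge i' (by omega))
  -- telescoping
  have htel : ∑ i ∈ Finset.range (m + 1), Δ i = 1 := by
    have := Finset.sum_range_sub (fun i => v (Y i)) (m + 1)
    simp only [hΔ]
    rw [this, hYm, hY0, hva, hvz, sub_zero]
  -- Cauchy-Schwarz
  have hCS : (1:ℝ) ≤ (∑ i ∈ Finset.range (m + 1), (C i)⁻¹)
      * (∑ i ∈ Finset.range (m + 1), C i * (Δ i)^2) := by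
    have h := Finset.sum_mul_sq_le_sq_mul_sq (Finset.range (m + 1))
      (fun i => (Real.sqrt (C i))⁻¹) (fun i => Real.sqrt (C i) * Δ i)
    have h1 : ∑ i ∈ Finset.range (m + 1), (Real.sqrt (C i))⁻¹ * (Real.sqrt (C i) * Δ i)
        = ∑ i ∈ Finset.range (m + 1), Δ i := by
      refine Finset.sum_congr rfl fun i hi => ?_
      have : Real.sqrt (C i) ≠ 0 := Real.sqrt_ne_zero'.mpr (hCpos i hi)
      field_simp
    have h2 : ∑ i ∈ Finset.range (m + 1), ((Real.sqrt (C i))⁻¹)^2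
        = ∑ i ∈ Finset.range (m + 1), (C i)⁻¹ := by
      refine Finset.sum_congr rfl fun i hi => ?_
      rw [← Real.sqrt_inv, Real.sq_sqrt (inv_nonneg.mpr (le_of_lt (hCpos i hi)))]
    have h3 : ∑ i ∈ Finset.range (m + 1), (Real.sqrt (C i) * Δ i)^2
        = ∑ i ∈ Finset.range (m + 1), C i * (Δ i)^2 := by
      refine Finset.sum_congr rfl fun i hi => ?_
      rw [mul_pow, Real.sq_sqrt (le_of_lt (hCpos i hi))]
    rw [h1, h2, h3, htel] at h
    simpa using h
  -- resistance bound
  have hres : ∑ i ∈ Finset.range (m + 1), (C i)⁻¹ ≤ (k * ρ + 1) / c x z := by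
    rw [Finset.sum_range_succ' (fun i => (C i)⁻¹) m]
    have hterm : ∀ i ∈ Finset.range m, (C (i + 1))⁻¹ ≤ ρ / c x z := by
      intro i hi
      rw [Finset.mem_range] at hi
      have hCi : γ ≤ C (i + 1) := by
        simp only [hC, hYsucc]
        exact hyedge i (by omega)
      have hγinv : (C (i+1))⁻¹ ≤ γ⁻¹ := inv_anti₀ hγ hCi
      rw [hγdef, mul_inv, inv_inv] at hγinv
      calc (C (i+1))⁻¹ ≤ ρ * (c x z)⁻¹ := hγinv
        _ = ρ / c x z := by ring
    have hsum : ∑ i ∈ Finset.range m, (C (i + 1))⁻¹ ≤ m * (ρ / c x z) := by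
      calc ∑ i ∈ Finset.range m, (C (i + 1))⁻¹ ≤ ∑ _i ∈ Finset.range m, ρ / c x z :=
            Finset.sum_le_sum hterm
        _ = m * (ρ / c x z) := by rw [Finset.sum_const, Finset.card_range, nsmul_eq_mul]
    have h0 : (C 0)⁻¹ = (c x z)⁻¹ := by rw [hC0]
    rw [h0]
    have hm_le : (m:ℝ) ≤ (k:ℝ) := Nat.cast_le.mpr hmk
    have hinv_pos : (0:ℝ) < (c x z)⁻¹ := by positivity
    have key : (m:ℝ) * (ρ / c x z) + (c x z)⁻¹ ≤ (k * ρ + 1) / c x z := by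
      rw [div_eq_mul_inv ρ, div_eq_mul_inv (↑k * ρ + 1)]
      have h1 : (m:ℝ) * ρ + 1 ≤ (k:ℝ) * ρ + 1 := by nlinarith
      nlinarith
    linarith
  -- energy bound
  have hen_le : ∑ i ∈ Finset.range (m + 1), C i * (Δ i)^2 ≤ c x z * v x := by
    have h1 := path_energy_le c hsymm hnonneg v m Y hYinj
    have h2 := energy_eq c hsymm a x z haz hxz hz v hva hvz hharm
    rw [h2] at h1
    simp only [hC, hΔ]
    linarith
  -- combine
  have hvx0 : 0 ≤ v x := (hIcc x).1
  have hk1 : (0:ℝ) < k * ρ + 1 := by positivity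
  have hfinal : (1:ℝ) ≤ (k * ρ + 1) * v x := by
    have hD' : 0 ≤ ∑ i ∈ Finset.range (m + 1), C i * (Δ i)^2 :=
      Finset.sum_nonneg fun i hi => mul_nonneg (le_of_lt (hCpos i hi)) (sq_nonneg _)
    calc (1:ℝ) ≤ (∑ i ∈ Finset.range (m + 1), (C i)⁻¹)
          * (∑ i ∈ Finset.range (m + 1), C i * (Δ i)^2) := hCS
      _ ≤ ((k * ρ + 1) / c x z) * (c x z * v x) := by
          apply mul_le_mul hres hen_le hD'
          positivity
      _ = (k * ρ + 1) * v x := by field_simp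
  rw [div_le_iff₀ hk1]
  linarith

/-! ### Markov chain recursions -/

noncomputable def trP (c : Ω → Ω → ℝ) (u w : Ω) : ℝ := c u w / ∑ v, c u v

lemma trP_nonneg (c : Ω → Ω → ℝ) (hnonneg : ∀ u v, 0 ≤ c u v)
    (hdeg : ∀ u, 0 < ∑ v, c u v) (u w : Ω) : 0 ≤ trP c u w :=
  div_nonneg (hnonneg u w) (le_of_lt (hdeg u))

lemma trP_sum (c : Ω → Ω → ℝ) (hdeg : ∀ u, 0 < ∑ v, c u v) (u : Ω) :
    ∑ w, trP c u w = 1 := by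
  unfold trP
  rw [← Finset.sum_div, div_self (ne_of_gt (hdeg u))]

lemma trP_le_one (c : Ω → Ω → ℝ) (hnonneg : ∀ u v, 0 ≤ c u v)
    (hdeg : ∀ u, 0 < ∑ v, c u v) (u w : Ω) : trP c u w ≤ 1 := by
  unfold trP
  rw [div_le_one (hdeg u)]
  exact Finset.single_le_sum (fun v _ => hnonneg u v) (Finset.mem_univ w)

variable (c : Ω → Ω → ℝ) (a z : Ω)

noncomputable def qfn : ℕ → Ω → ℝ
  | 0 => fun u => if u = a ∨ u = z then 0 else 1
  | (n+1) => fun u => if u = a ∨ u = z then 0 else ∑ w, trP c u w * qfn n w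

noncomputable def gfn : ℕ → Ω → ℝ
  | 0 => fun u => if u = a then 1 else 0
  | (n+1) => fun u => if u = a then 1 else if u = z then 0 else ∑ w, trP c u w * gfn n w

variable {c a z}

lemma qfn_nonneg (hnonneg : ∀ u v, 0 ≤ c u v) (hdeg : ∀ u, 0 < ∑ v, c u v) :
    ∀ n u, 0 ≤ qfn c a z n u := by
  intro n
  induction n with
  | zero => intro u; unfold qfn; split <;> norm_num
  | succ n IH =>
    intro u
    unfold qfn
    split
    · exact le_refl 0
    · exact Finset.sum_nonneg fun w _ =>
        mul_nonneg (trP_nonneg c hnonneg hdeg u w) (IH w)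

lemma qfn_le_one (hnonneg : ∀ u v, 0 ≤ c u v) (hdeg : ∀ u, 0 < ∑ v, c u v) :
    ∀ n u, qfn c a z n u ≤ 1 := by
  intro n
  induction n with
  | zero => intro u; unfold qfn; split <;> norm_num
  | succ n IH =>
    intro u
    unfold qfn
    split
    · norm_num
    · calc ∑ w, trP c u w * qfn c a z n w ≤ ∑ w, trP c u w * 1 :=
            Finset.sum_le_sum fun w _ => mul_le_mul_of_nonneg_left (IH w)
              (trP_nonneg c hnonneg hdeg u w)
        _ = 1 := by simp [trP_sum c hdeg u]

lemma qfn_boundary (hu : u = a ∨ u = z) : ∀ n, qfn c a z n u = 0 := by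
  intro n
  cases n <;> (unfold qfn; rw [if_pos hu])

lemma qfn_anti (hnonneg : ∀ u v, 0 ≤ c u v) (hdeg : ∀ u, 0 < ∑ v, c u v) :
    ∀ n u, qfn c a z (n + 1) u ≤ qfn c a z n u := by
  intro n
  induction n with
  | zero =>
    intro u
    show qfn c a z 1 u ≤ qfn c a z 0 u
    unfold qfn
    split
    · exact le_refl 0
    · calc ∑ w, trP c u w * qfn c a z 0 w ≤ ∑ w, trP c u w * 1 := by
            apply Finset.sum_le_sum
            intro w _
            apply mul_le_mul_of_nonneg_left _ (trP_nonneg c hnonneg hdeg u w)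
            unfold qfn; split <;> norm_num
        _ = 1 := by simp [trP_sum c hdeg u]
  | succ n IH =>
    intro u
    show qfn c a z (n+2) u ≤ qfn c a z (n+1) u
    unfold qfn
    split
    · exact le_refl 0
    · exact Finset.sum_le_sum fun w _ =>
        mul_le_mul_of_nonneg_left (IH w) (trP_nonneg c hnonneg hdeg u w)

lemma qfn_anti' (hnonneg : ∀ u v, 0 ≤ c u v) (hdeg : ∀ u, 0 < ∑ v, c u v)
    {n m : ℕ} (h : n ≤ m) (u : Ω) : qfn c a z m u ≤ qfn c a z n u := by
  induction m with
  | zero => rw [Nat.le_zero.mp h]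
  | succ m IH =>
    rcases Nat.lt_or_ge n (m+1) with h' | h'
    · exact le_trans (qfn_anti hnonneg hdeg m u) (IH (by omega))
    · have : n = m + 1 := by omega
      rw [this]

lemma gfn_nonneg (hnonneg : ∀ u v, 0 ≤ c u v) (hdeg : ∀ u, 0 < ∑ v, c u v) :
    ∀ n u, 0 ≤ gfn c a z n u := by
  intro n
  induction n with
  | zero => intro u; unfold gfn; split <;> norm_num
  | succ n IH =>
    intro u
    unfold gfn
    split
    · norm_num
    · split
      · exact le_refl 0
      · exact Finset.sum_nonneg fun w _ =>
          mul_nonneg (trP_nonneg c hnonneg hdeg u w) (IH w)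

/-- submartingale bound: `v ≤ g + q`. -/
lemma v_le_g_add_q (hnonneg : ∀ u v, 0 ≤ c u v) (hdeg : ∀ u, 0 < ∑ v, c u v)
    (haz : a ≠ z)
    (v : Ω → ℝ) (hva : v a = 1) (hvz : v z = 0) (hIcc : ∀ u, v u ∈ Set.Icc (0:ℝ) 1)
    (hharm : ∀ u, u ≠ a → u ≠ z → ∑ w, c u w * (v u - v w) = 0) :
    ∀ n u, v u ≤ gfn c a z n u + qfn c a z n u := by
  have hharm' : ∀ u, u ≠ a → u ≠ z → v u = ∑ w, trP c u w * v w := by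
    intro u hua huz
    have h := hharm u hua huz
    have h2 : ∑ w, c u w * v u = ∑ w, c u w * v w := by
      have : ∑ w, (c u w * v u - c u w * v w) = 0 := by
        rw [← h]
        exact Finset.sum_congr rfl fun w _ => by ring
      rw [Finset.sum_sub_distrib] at this
      linarith
    rw [← Finset.sum_mul] at h2
    have hXpos := hdeg u
    have : v u = (∑ w, c u w * v w) / (∑ w, c u w) := by
      field_simp
      linarith [h2]
    rw [this, Finset.sum_div]
    refine Finset.sum_congr rfl fun w _ => ?_
    unfold trP
    ring
  intro n
  induction n with
  | zero =>
    intro u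
    unfold gfn qfn
    by_cases hua : u = a
    · simp [hua, if_pos (Or.inl hua), hva]
    · by_cases huz : u = z
      · subst huz
        rw [if_neg hua, if_pos (Or.inr rfl), hvz]
        norm_num
      · rw [if_neg hua, if_neg (by tauto)]
        linarith [(hIcc u).2]
  | succ n IH =>
    intro u
    unfold gfn qfn
    by_cases hua : u = a
    · rw [if_pos hua, if_pos (Or.inl hua), hua, hva]
      norm_num
    · by_cases huz : u = z
      · rw [if_neg hua, if_pos huz, if_pos (Or.inr huz), huz, hvz]
        norm_num
      · rw [if_neg hua, if_neg huz, if_neg (by tauto)]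
        rw [hharm' u hua huz, ← Finset.sum_add_distrib]
        apply Finset.sum_le_sum
        intro w _
        rw [← mul_add]
        exact mul_le_mul_of_nonneg_left (IH w) (trP_nonneg c hnonneg hdeg u w)

/-- along a positive-probability path to `a`, the avoidance probability drops. -/
lemma qfn_path_bound (hnonneg : ∀ u v, 0 ≤ c u v) (hdeg : ∀ u, 0 < ∑ v, c u v) :
    ∀ (r : ℕ) (w : ℕ → Ω), w r = a → (∀ i < r, 0 < c (w i) (w (i+1))) →
      qfn c a z r (w 0) ≤ 1 - ∏ i ∈ Finset.range r, trP c (w i) (w (i+1)) := by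
  intro r
  induction r with
  | zero =>
    intro w hw _
    unfold qfn
    rw [if_pos (Or.inl hw)]
    simp
  | succ r IH =>
    intro w hw hpos
    have hprod_le : ∀ s : Finset ℕ, (∀ i ∈ s, True) → ∏ i ∈ s, trP c (w i) (w (i+1)) ≤ 1 :=
      fun s _ => Finset.prod_le_one (fun i _ => trP_nonneg c hnonneg hdeg _ _)
        (fun i _ => trP_le_one c hnonneg hdeg _ _)
    unfold qfn
    split
    · have := hprod_le (Finset.range (r+1)) (fun _ _ => trivial)
      linarith
    · -- u = w 0 not boundary
      have hsplit : ∑ w', trP c (w 0) w' * qfn c a z r w'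
          = trP c (w 0) (w 1) * qfn c a z r (w 1)
            + ∑ w' ∈ Finset.univ.erase (w 1), trP c (w 0) w' * qfn c a z r w' := by
        rw [← Finset.add_sum_erase _ _ (Finset.mem_univ (w 1))]
      have hIH := IH (fun i => w (i+1)) hw (fun i hi => hpos (i+1) (by omega))
      have hrest : ∑ w' ∈ Finset.univ.erase (w 1), trP c (w 0) w' * qfn c a z r w'
          ≤ ∑ w' ∈ Finset.univ.erase (w 1), trP c (w 0) w' := by
        apply Finset.sum_le_sum
        intro w' _
        nth_rewrite 2 [← mul_one (trP c (w 0) w')]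
        exact mul_le_mul_of_nonneg_left (qfn_le_one hnonneg hdeg r w')
          (trP_nonneg c hnonneg hdeg _ _)
      have hsum_erase : ∑ w' ∈ Finset.univ.erase (w 1), trP c (w 0) w'
          = 1 - trP c (w 0) (w 1) := by
        have := trP_sum c hdeg (w 0)
        rw [← Finset.add_sum_erase _ _ (Finset.mem_univ (w 1))] at this
        linarith
      have hstep : trP c (w 0) (w 1) * qfn c a z r (w 1)
          ≤ trP c (w 0) (w 1) * (1 - ∏ i ∈ Finset.range r, trP c (w (i+1)) (w (i+2))) :=
        mul_le_mul_of_nonneg_left hIH (trP_nonneg c hnonneg hdeg _ _)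
      rw [hsplit]
      have hprodsucc : ∏ i ∈ Finset.range (r+1), trP c (w i) (w (i+1))
          = (∏ i ∈ Finset.range r, trP c (w (i+1)) (w (i+2))) * trP c (w 0) (w 1) :=
        Finset.prod_range_succ' (fun i => trP c (w i) (w (i+1))) r
      rw [hprodsucc]
      have := hrest.trans (le_of_eq hsum_erase)
      nlinarith [hstep]

/-- submultiplicativity over time blocks. -/
lemma qfn_block (hnonneg : ∀ u v, 0 ≤ c u v) (hdeg : ∀ u, 0 < ∑ v, c u v)
    (M : ℝ) (hM0 : 0 ≤ M) (m : ℕ) (hMm : ∀ u, qfn c a z m u ≤ M) :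
    ∀ n u, qfn c a z (n + m) u ≤ qfn c a z n u * M := by
  intro n
  induction n with
  | zero =>
    intro u
    rw [Nat.zero_add]
    by_cases hu : u = a ∨ u = z
    · rw [qfn_boundary hu, qfn_boundary hu, zero_mul]
    · have h0 : qfn c a z 0 u = 1 := by unfold qfn; rw [if_neg hu]
      rw [h0, one_mul]
      exact hMm u
  | succ n IH =>
    intro u
    have hrw : n + 1 + m = (n + m) + 1 := by omega
    rw [hrw]
    by_cases hu : u = a ∨ u = z
    · rw [qfn_boundary hu, qfn_boundary hu, zero_mul]
    · show qfn c a z (n + m + 1) u ≤ qfn c a z (n+1) u * M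
      unfold qfn
      rw [if_neg hu, if_neg hu, Finset.sum_mul]
      exact Finset.sum_le_sum fun w _ => by
        rw [mul_assoc]
        exact mul_le_mul_of_nonneg_left (IH w) (trP_nonneg c hnonneg hdeg u w)

lemma gfn_le_one (hnonneg : ∀ u v, 0 ≤ c u v) (hdeg : ∀ u, 0 < ∑ v, c u v) :
    ∀ n u, gfn c a z n u ≤ 1 := by
  intro n
  induction n with
  | zero => intro u; unfold gfn; split <;> norm_num
  | succ n IH =>
    intro u
    unfold gfn
    split
    · norm_num
    · split
      · norm_num
      · calc ∑ w, trP c u w * gfn c a z n w ≤ ∑ w, trP c u w * 1 :=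
              Finset.sum_le_sum fun w _ => mul_le_mul_of_nonneg_left (IH w)
                (trP_nonneg c hnonneg hdeg u w)
          _ = 1 := by simp [trP_sum c hdeg u]

/-! ### path sums -/

noncomputable def wgt (c : Ω → Ω → ℝ) : (n : ℕ) → Ω → (Fin n → Ω) → ℝ
  | 0, _, _ => 1
  | (n+1), u, p => trP c u (p 0) * wgt c n (p 0) (Fin.tail p)

def goodF (a z : Ω) : (n : ℕ) → Ω → (Fin n → Ω) → Bool
  | 0, u, _ => decide (u = a)
  | (n+1), u, p => if u = a then true else if u = z then false else goodF a z n (p 0) (Fin.tail p)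

lemma wgt_succ {n : ℕ} (u : Ω) (p : Fin (n+1) → Ω) :
    wgt c (n+1) u p = trP c u (p 0) * wgt c n (p 0) (Fin.tail p) := rfl

lemma gfn_succ {n : ℕ} (u : Ω) :
    gfn c a z (n+1) u
      = if u = a then 1 else if u = z then 0 else ∑ w, trP c u w * gfn c a z n w := rfl

lemma goodF_succ {n : ℕ} (u : Ω) (p : Fin (n+1) → Ω) :
    goodF a z (n+1) u p
      = if u = a then true else if u = z then false else goodF a z n (p 0) (Fin.tail p) := rfl

lemma sum_pi_succ {n : ℕ} (f : (Fin (n+1) → Ω) → ℝ) :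
    ∑ p : Fin (n+1) → Ω, f p = ∑ y : Ω, ∑ p' : Fin n → Ω, f (Fin.cons y p') := by
  rw [← Equiv.sum_comp (Fin.consEquiv (fun _ : Fin (n+1) => Ω)) f, Fintype.sum_prod_type]
  rfl

lemma wgt_nonneg (hnonneg : ∀ u v, 0 ≤ c u v) (hdeg : ∀ u, 0 < ∑ v, c u v) :
    ∀ (n : ℕ) (u : Ω) (p : Fin n → Ω), 0 ≤ wgt c n u p := by
  intro n
  induction n with
  | zero => intro u p; unfold wgt; norm_num
  | succ n IH =>
    intro u p
    unfold wgt
    exact mul_nonneg (trP_nonneg c hnonneg hdeg u (p 0)) (IH (p 0) (Fin.tail p))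

lemma sum_wgt (hdeg : ∀ u, 0 < ∑ v, c u v) :
    ∀ (n : ℕ) (u : Ω), ∑ p : Fin n → Ω, wgt c n u p = 1 := by
  intro n
  induction n with
  | zero =>
    intro u
    unfold wgt
    simp
  | succ n IH =>
    intro u
    rw [sum_pi_succ (fun p => wgt c (n+1) u p)]
    have h : ∀ y : Ω, ∑ p' : Fin n → Ω, wgt c (n+1) u (Fin.cons y p') = trP c u y := by
      intro y
      have : ∀ p' : Fin n → Ω, wgt c (n+1) u (Fin.cons y p') = trP c u y * wgt c n y p' := by
        intro p'
        rw [wgt_succ, Fin.cons_zero, Fin.tail_cons]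
      rw [Finset.sum_congr rfl fun p' _ => this p', ← Finset.mul_sum, IH y, mul_one]
    rw [Finset.sum_congr rfl fun y _ => h y]
    exact trP_sum c hdeg u

lemma gfn_eq_sum (hdeg : ∀ u, 0 < ∑ v, c u v) :
    ∀ (n : ℕ) (u : Ω), gfn c a z n u
      = ∑ p : Fin n → Ω, (if goodF a z n u p then wgt c n u p else 0) := by
  intro n
  induction n with
  | zero =>
    intro u
    unfold gfn goodF wgt
    by_cases hu : u = a <;> simp [hu]
  | succ n IH =>
    intro u
    by_cases hua : u = a
    · have h1 : gfn c a z (n+1) u = 1 := by rw [gfn_succ, if_pos hua]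
      have h2 : ∀ p : Fin (n+1) → Ω, goodF a z (n+1) u p = true := by
        intro p; rw [goodF_succ, if_pos hua]
      rw [h1, Finset.sum_congr rfl fun p _ => by rw [if_pos (h2 p)], sum_wgt hdeg (n+1) u]
    · by_cases huz : u = z
      · have h1 : gfn c a z (n+1) u = 0 := by rw [gfn_succ, if_neg hua, if_pos huz]
        have h2 : ∀ p : Fin (n+1) → Ω, goodF a z (n+1) u p = false := by
          intro p; rw [goodF_succ, if_neg hua, if_pos huz]
        rw [h1]
        symm
        apply Finset.sum_eq_zero
        intro p _
        rw [h2 p]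
        simp
      · have h1 : gfn c a z (n+1) u = ∑ w, trP c u w * gfn c a z n w := by
          rw [gfn_succ, if_neg hua, if_neg huz]
        rw [h1, sum_pi_succ (fun p => if goodF a z (n+1) u p then wgt c (n+1) u p else 0)]
        refine Finset.sum_congr rfl fun y _ => ?_
        have h2 : ∀ p' : Fin n → Ω,
            (if goodF a z (n+1) u (Fin.cons y p') then wgt c (n+1) u (Fin.cons y p') else 0)
            = trP c u y * (if goodF a z n y p' then wgt c n y p' else 0) := by
          intro p'
          have hg : goodF a z (n+1) u (Fin.cons y p') = goodF a z n y p' := by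
            rw [goodF_succ, if_neg hua, if_neg huz, Fin.cons_zero, Fin.tail_cons]
          have hw : wgt c (n+1) u (Fin.cons y p') = trP c u y * wgt c n y p' := by
            rw [wgt_succ, Fin.cons_zero, Fin.tail_cons]
          rw [hg, hw]
          split <;> simp
        rw [Finset.sum_congr rfl fun p' _ => h2 p', ← Finset.mul_sum, IH y]

lemma tail_shift (t : ℕ → Ω) (n : ℕ) :
    Fin.tail (fun i : Fin (n+1) => t (i.1+1)) = fun i : Fin n => t (i.1+1+1) := by
  funext i
  simp [Fin.tail, Fin.val_succ]

lemma wgt_eq_prod :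
    ∀ (n : ℕ) (t : ℕ → Ω), wgt c n (t 0) (fun i : Fin n => t (i.1 + 1))
      = ∏ i ∈ Finset.range n, trP c (t i) (t (i+1)) := by
  intro n
  induction n with
  | zero => intro t; unfold wgt; simp
  | succ n IH =>
    intro t
    rw [Finset.prod_range_succ' (fun i => trP c (t i) (t (i+1))) n, wgt_succ, tail_shift]
    have h := IH (fun s => t (s+1))
    norm_num
    rw [h]
    ring

lemma goodF_iff (haz : a ≠ z) :
    ∀ (n : ℕ) (t : ℕ → Ω), goodF a z n (t 0) (fun i : Fin n => t (i.1 + 1)) = true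
      ↔ ∃ s, s ≤ n ∧ t s = a ∧ ∀ r < s, t r ≠ z := by
  intro n
  induction n with
  | zero =>
    intro t
    unfold goodF
    simp only [decide_eq_true_eq]
    constructor
    · intro h
      exact ⟨0, le_refl 0, h, fun r hr => absurd hr (Nat.not_lt_zero r)⟩
    · rintro ⟨s, hs, hta, _⟩
      rw [Nat.le_zero.mp hs] at hta
      exact hta
  | succ n IH =>
    intro t
    have hIH := IH (fun s => t (s+1))
    norm_num at hIH
    by_cases h0a : t 0 = a
    · constructor
      · intro _
        exact ⟨0, Nat.zero_le _, h0a, fun r hr => absurd hr (Nat.not_lt_zero r)⟩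
      · intro _
        rw [goodF_succ, if_pos h0a]
    · by_cases h0z : t 0 = z
      · constructor
        · intro h
          rw [goodF_succ, if_neg h0a, if_pos h0z] at h
          exact absurd h (by simp)
        · rintro ⟨s, hs, hta, hz'⟩
          exfalso
          rcases Nat.eq_zero_or_pos s with h | h
          · rw [h] at hta; exact h0a hta
          · exact hz' 0 h h0z
      · have hstep : goodF a z (n+1) (t 0) (fun i : Fin (n+1) => t (i.1+1))
            = goodF a z n (t 1) (fun i : Fin n => t (i.1+1+1)) := by
          rw [goodF_succ, if_neg h0a, if_neg h0z, tail_shift]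
          norm_num
        rw [hstep]
        constructor
        · intro h
          obtain ⟨s, hs, hta, hz'⟩ := hIH.mp h
          refine ⟨s + 1, by omega, hta, ?_⟩
          intro r hr
          rcases Nat.eq_zero_or_pos r with h' | h'
          · rw [h']; exact h0z
          · obtain ⟨r', rfl⟩ : ∃ r', r = r' + 1 := ⟨r - 1, by omega⟩
            exact hz' r' (by omega)
        · rintro ⟨s, hs, hta, hz'⟩
          rcases Nat.eq_zero_or_pos s with h' | h'
          · rw [h'] at hta; exact absurd hta h0a
          · obtain ⟨s', rfl⟩ : ∃ s', s = s' + 1 := ⟨s - 1, by omega⟩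
            exact hIH.mpr ⟨s', by omega, hta, fun r hr => hz' (r+1) (by omega)⟩

lemma hit_lt (haz : a ≠ z) (ω : ℕ → Ω) (s : ℕ) (hs : ω s = a)
    (hzlt : ∀ r < s, ω r ≠ z) : hitTime {a} ω < hitTime {z} ω := by
  have h1 : hitTime {a} ω ≤ (s : ℝ≥0∞) := by
    apply iInf_le_of_le s
    apply iInf_le_of_le _ le_rfl
    exact hs
  have h2 : ((s : ℝ≥0∞) + 1) ≤ hitTime {z} ω := by
    apply le_iInf
    intro r
    apply le_iInf
    intro hr
    have hrz : ω r = z := hr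
    have hge : s + 1 ≤ r := by
      rcases Nat.lt_or_ge r (s+1) with h | h
      · rcases Nat.lt_or_ge r s with h' | h'
        · exact absurd hrz (hzlt r h')
        · have heq : r = s := by omega
          rw [heq, hs] at hrz
          exact absurd hrz haz
      · exact h
    calc ((s:ℝ≥0∞)+1) = ((s+1 : ℕ) : ℝ≥0∞) := by push_cast; ring
      _ ≤ r := Nat.cast_le.mpr hge
  calc hitTime {a} ω ≤ (s : ℝ≥0∞) := h1
    _ < (s : ℝ≥0∞) + 1 := ENNReal.lt_add_right (ENNReal.natCast_ne_top s) one_ne_zero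
    _ ≤ hitTime {z} ω := h2
end HPPaux

open HPPaux

/-- **Hitting precedence probability from a bottleneck state (Lemma: HPP from a bottleneck).**
Let `(Ω, c)` be a connected network and `a, x, z` pairwise distinct with all the
conductance of `z` concentrated on the edge `{x, z}`.  If there is a path
`x = x₀, x₁, …, x_k = a` each of whose edges has conductance at least `ρ⁻¹·c(x,z)`,
then the network Markov chain started at `x` satisfies
`P{τ_a < τ_z} ≥ 1/(kρ + 1)`. -/
theorem hpp_from_bottleneck
    {Ω : Type*} [Fintype Ω] [DecidableEq Ω] [Nonempty Ω] [MeasurableSpace Ω]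
    (c : Ω → Ω → ℝ) (hsymm : ∀ u v, c u v = c v u) (hnonneg : ∀ u v, 0 ≤ c u v)
    (hdeg : ∀ u, 0 < ∑ v, c u v)
    (hconn : ∀ u v : Ω, ∃ (m : ℕ) (w : ℕ → Ω),
      w 0 = u ∧ w m = v ∧ ∀ i < m, 0 < c (w i) (w (i + 1)))
    (a x z : Ω) (hax : a ≠ x) (haz : a ≠ z) (hxz : x ≠ z)
    (hz : ∀ u, u ≠ x → u ≠ z → c u z = 0)
    (k : ℕ) (xs : ℕ → Ω) (hxs0 : xs 0 = x) (hxsk : xs k = a)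
    (ρ : ℝ) (hρ : 0 < ρ)
    (hpath : ∀ i < k, ρ⁻¹ * c x z ≤ c (xs i) (xs (i + 1)))
    (μ : Measure (ℕ → Ω)) [IsProbabilityMeasure μ]
    (hμ : ∀ (n : ℕ) (w : ℕ → Ω),
      μ {ω | ∀ i ≤ n, ω i = w i} =
        ENNReal.ofReal ((if w 0 = x then (1 : ℝ) else 0) *
          ∏ i ∈ Finset.range n, c (w i) (w (i + 1)) / (∑ u, c (w i) u))) :
    ENNReal.ofReal (1 / (k * ρ + 1)) ≤
      μ {ω | hitTime {a} ω < hitTime {z} ω} := by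
  classical
  obtain ⟨m0, w0, hw00, hw0m, hw0pos⟩ := hconn z x
  have hcxz : 0 < c x z := cxz_pos c hsymm x z hxz hz m0 w0 hw00 hw0m hw0pos
  obtain ⟨v, hva, hvz, hIcc, hharm⟩ := exists_harmonic c hsymm hnonneg a z haz
  have hvx : 1 / (k * ρ + 1) ≤ v x :=
    harmonic_lowbound c hsymm hnonneg a x z hax haz hxz hz hcxz k xs hxs0 hxsk ρ hρ
      hpath v hva hvz hIcc hharm
  set E := {ω : ℕ → Ω | hitTime {a} ω < hitTime {z} ω} with hE
  -- step 1: cylinder bound for every horizon n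
  have key : ∀ n : ℕ, ENNReal.ofReal (gfn c a z n x) ≤ μ E := by
    intro n
    set traj : (Fin n → Ω) → (ℕ → Ω) := fun p i =>
      if h : 1 ≤ i ∧ i ≤ n then p ⟨i - 1, by omega⟩ else x with htraj
    have htraj0 : ∀ p, traj p 0 = x := by
      intro p
      simp [htraj]
    have htrajsucc : ∀ p (i : Fin n), traj p (i.1 + 1) = p i := by
      intro p i
      have h : 1 ≤ i.1 + 1 ∧ i.1 + 1 ≤ n := ⟨by omega, by omega⟩
      simp only [htraj, dif_pos h]
      exact congrArg p (Fin.ext (by simp))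
    have htrajfun : ∀ p, (fun i : Fin n => traj p (i.1+1)) = p :=
      fun p => funext (htrajsucc p)
    have hcyl : ∀ p : Fin n → Ω,
        μ {ω | ∀ i ≤ n, ω i = traj p i} = ENNReal.ofReal (wgt c n x p) := by
      intro p
      rw [hμ n (traj p)]
      congr 1
      rw [htraj0, if_pos rfl, one_mul]
      have hwp := wgt_eq_prod (c := c) n (traj p)
      rw [htraj0, htrajfun] at hwp
      have hconv : ∏ i ∈ Finset.range n, c (traj p i) (traj p (i+1)) / (∑ u, c (traj p i) u)
          = ∏ i ∈ Finset.range n, trP c (traj p i) (traj p (i+1)) := rfl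
      rw [hconv, ← hwp]
    set Bad : Finset (Fin n → Ω) := Finset.univ.filter (fun p => ¬ goodF a z n x p)
      with hBad
    have hcover : Eᶜ ⊆ {ω : ℕ → Ω | ω 0 ≠ x}
        ∪ ⋃ p ∈ Bad, {ω | ∀ i ≤ n, ω i = traj p i} := by
      intro ω hω
      by_cases h0 : ω 0 = x
      · right
        set p : Fin n → Ω := fun i => ω (i.1 + 1) with hp
        have hmem : p ∈ Bad := by
          rw [hBad, Finset.mem_filter]
          refine ⟨Finset.mem_univ p, ?_⟩
          intro hgood
          have hgood' : goodF a z n (ω 0) (fun i : Fin n => ω (i.1 + 1)) = true := by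
            rw [h0]; exact hgood
          obtain ⟨s, hs, hsa, hsz⟩ := (goodF_iff haz n ω).mp hgood'
          have : ω ∈ E := hit_lt haz ω s hsa hsz
          exact hω this
        refine Set.mem_biUnion hmem ?_
        intro i hi
        rcases Nat.eq_zero_or_pos i with h | h
        · rw [h, htraj0, h0]
        · have hcond : 1 ≤ i ∧ i ≤ n := ⟨by omega, hi⟩
          simp only [htraj, dif_pos hcond, hp]
          congr 1
          omega
      · left
        exact h0
    have h2 : μ {ω : ℕ → Ω | ω 0 ≠ x} = 0 := by
      have hcyl0 : ∀ y : Ω, y ≠ x →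
          μ {ω : ℕ → Ω | ∀ i ≤ 0, ω i = (fun _ : ℕ => y) i} = 0 := by
        intro y hy
        rw [hμ 0 (fun _ => y)]
        simp [hy]
      have hsub : {ω : ℕ → Ω | ω 0 ≠ x}
          ⊆ ⋃ y ∈ Finset.univ.filter (fun y : Ω => y ≠ x),
              {ω : ℕ → Ω | ∀ i ≤ 0, ω i = (fun _ : ℕ => y) i} := by
        intro ω hω
        refine Set.mem_biUnion (Finset.mem_filter.mpr ⟨Finset.mem_univ _, hω⟩) ?_
        intro i hi
        rw [Nat.le_zero.mp hi]
      refine le_antisymm ?_ zero_le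
      calc μ {ω : ℕ → Ω | ω 0 ≠ x}
          ≤ μ (⋃ y ∈ Finset.univ.filter (fun y : Ω => y ≠ x),
              {ω : ℕ → Ω | ∀ i ≤ 0, ω i = (fun _ : ℕ => y) i}) := measure_mono hsub
        _ ≤ ∑ y ∈ Finset.univ.filter (fun y : Ω => y ≠ x),
              μ {ω : ℕ → Ω | ∀ i ≤ 0, ω i = (fun _ : ℕ => y) i} :=
            measure_biUnion_finset_le _ _
        _ = 0 := by
            apply Finset.sum_eq_zero
            intro y hy
            exact hcyl0 y (Finset.mem_filter.mp hy).2
    have hg_nonneg := gfn_nonneg (c := c) (a := a) (z := z) hnonneg hdeg n x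
    have hg_le_one := gfn_le_one (c := c) (a := a) (z := z) hnonneg hdeg n x
    have hEc : μ Eᶜ ≤ ENNReal.ofReal (1 - gfn c a z n x) := by
      have hbadsum : ∑ p ∈ Bad, wgt c n x p = 1 - gfn c a z n x := by
        have htot := sum_wgt (c := c) hdeg n x
        have hgoodsum : ∑ p ∈ Finset.univ.filter (fun p => goodF a z n x p), wgt c n x p
            = gfn c a z n x := by
          rw [gfn_eq_sum (a := a) (z := z) hdeg n x, Finset.sum_filter]
        have hsplit := Finset.sum_filter_add_sum_filter_not Finset.univ
          (fun p => goodF a z n x p = true) (wgt c n x)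
        rw [htot] at hsplit
        rw [hgoodsum] at hsplit
        rw [hBad]
        linarith [hsplit]
      calc μ Eᶜ ≤ μ ({ω : ℕ → Ω | ω 0 ≠ x}
            ∪ ⋃ p ∈ Bad, {ω | ∀ i ≤ n, ω i = traj p i}) := measure_mono hcover
        _ ≤ μ {ω : ℕ → Ω | ω 0 ≠ x}
            + μ (⋃ p ∈ Bad, {ω | ∀ i ≤ n, ω i = traj p i}) := measure_union_le _ _
        _ = μ (⋃ p ∈ Bad, {ω | ∀ i ≤ n, ω i = traj p i}) := by rw [h2, zero_add]
        _ ≤ ∑ p ∈ Bad, μ {ω | ∀ i ≤ n, ω i = traj p i} := measure_biUnion_finset_le _ _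
        _ = ∑ p ∈ Bad, ENNReal.ofReal (wgt c n x p) :=
            Finset.sum_congr rfl fun p _ => hcyl p
        _ = ENNReal.ofReal (∑ p ∈ Bad, wgt c n x p) :=
            (ENNReal.ofReal_sum_of_nonneg fun p _ =>
              wgt_nonneg (c := c) hnonneg hdeg n x p).symm
        _ = ENNReal.ofReal (1 - gfn c a z n x) := by rw [hbadsum]
    have hone : (1:ℝ≥0∞) ≤ μ E + μ Eᶜ := by
      have h := measure_union_le (μ := μ) E Eᶜ
      rw [Set.union_compl_self, measure_univ] at h
      exact h
    have hsum1 : ENNReal.ofReal (gfn c a z n x) + ENNReal.ofReal (1 - gfn c a z n x)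
        = 1 := by
      rw [← ENNReal.ofReal_add hg_nonneg (by linarith)]
      norm_num
    have h4 : ENNReal.ofReal (gfn c a z n x) ≤ 1 - μ Eᶜ := by
      have e1 : ENNReal.ofReal (gfn c a z n x)
          = 1 - ENNReal.ofReal (1 - gfn c a z n x) := by
        rw [← hsum1, ENNReal.add_sub_cancel_right ENNReal.ofReal_ne_top]
      rw [e1]
      exact tsub_le_tsub_left hEc 1
    have h5 : 1 - μ Eᶜ ≤ μ E := by
      rw [tsub_le_iff_right]
      exact hone
    exact le_trans h4 h5
  -- step 2: the avoidance probability decays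
  choose mf wf hwf0 hwfend hwfpos using fun u => hconn u a
  set N := Finset.univ.sup mf with hN
  have hqN : ∀ u : Ω, qfn c a z N u
      ≤ 1 - ∏ i ∈ Finset.range (mf u), trP c (wf u i) (wf u (i+1)) := by
    intro u
    have h1 := qfn_path_bound (a := a) (z := z) hnonneg hdeg (mf u) (wf u)
      (hwfend u) (hwfpos u)
    rw [hwf0 u] at h1
    exact le_trans (qfn_anti' hnonneg hdeg (Finset.le_sup (Finset.mem_univ u)) u) h1
  set M := Finset.univ.sup' Finset.univ_nonempty (qfn c a z N) with hM
  have hMle : ∀ u : Ω, qfn c a z N u ≤ M :=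
    fun u => Finset.le_sup' (qfn c a z N) (Finset.mem_univ u)
  have hM0 : 0 ≤ M :=
    le_trans (qfn_nonneg hnonneg hdeg N (Classical.arbitrary Ω)) (hMle _)
  have hM1 : M < 1 := by
    obtain ⟨u₀, _, hu₀⟩ := Finset.exists_mem_eq_sup' Finset.univ_nonempty (qfn c a z N)
    rw [hM, hu₀]
    have hδ : 0 < ∏ i ∈ Finset.range (mf u₀), trP c (wf u₀ i) (wf u₀ (i+1)) :=
      Finset.prod_pos fun i hi =>
        div_pos (hwfpos u₀ i (Finset.mem_range.mp hi)) (hdeg _)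
    linarith [hqN u₀]
  have hMj : ∀ j : ℕ, qfn c a z (j * N) x ≤ M ^ j := by
    intro j
    induction j with
    | zero =>
      rw [Nat.zero_mul, pow_zero]
      exact qfn_le_one hnonneg hdeg 0 x
    | succ j IH =>
      have hstep := qfn_block hnonneg hdeg M hM0 N hMle (j * N) x
      have harith : (j + 1) * N = j * N + N := by ring
      rw [harith, pow_succ]
      exact le_trans hstep (mul_le_mul_of_nonneg_right IH hM0)
  -- step 3: conclude
  refine ENNReal.le_of_forall_pos_le_add fun ε hε _ => ?_
  obtain ⟨j, hj⟩ := exists_pow_lt_of_lt_one (show (0:ℝ) < (ε:ℝ) by exact_mod_cast hε) hM1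
  have hq : qfn c a z (j * N) x ≤ (ε:ℝ) := le_trans (hMj j) (le_of_lt hj)
  have hv := v_le_g_add_q hnonneg hdeg haz v hva hvz hIcc hharm (j * N) x
  calc ENNReal.ofReal (1 / (k * ρ + 1)) ≤ ENNReal.ofReal (v x) :=
        ENNReal.ofReal_le_ofReal hvx
    _ ≤ ENNReal.ofReal (gfn c a z (j * N) x + qfn c a z (j * N) x) :=
        ENNReal.ofReal_le_ofReal hv
    _ ≤ ENNReal.ofReal (gfn c a z (j * N) x) + ENNReal.ofReal (qfn c a z (j * N) x) :=
        ENNReal.ofReal_add_le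
    _ ≤ μ E + ↑ε := by
        refine add_le_add (key (j * N)) ?_
        rw [← ENNReal.ofReal_coe_nnreal]
        exact ENNReal.ofReal_le_ofReal hq
end

section
/- Let (Ω, c) be a network and let u, v, w ∈ Ω be pairwise distinct with c(v, x) = 0 for every x ∉ {u, w} and c(u,v) + c(v,w) > 0. Define a conductance c' on Ω \ {v} by c'(u,w) = c'(w,u) := c(u,w) + c(u,v)c(v,w)/(c(u,v) + c(v,w)) and c'(x,y) := c(x,y) for all other pairs x, y ∈ Ω \ {v}. If h : Ω → ℝ satisfies the mean-value equation at v, i.e. ∑_{x∈Ω} c(v,x)(h(x) − h(v)) = 0, then ∑_{x ∈ Ω\{v}} c'(u,x)(h(x) − h(u)) = ∑_{x ∈ Ω} c(u,x)(h(x) − h(u)). In particular, if in addition ∑_{x∈Ω} c(u,x)(h(x) − h(u)) = 0, then ∑_{x ∈ Ω\{v}} c'(u,x)(h(x) − h(u)) = 0, i.e. harmonicity of h at u is preserved by the series–parallel reduction. -/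
/-!
Harmonicity at `v`, whose only neighbours are `u` and `w`, says that the currents
`c u v (h v - h u)` and `c v w (h w - h v)` through the two series edges agree; the common value
is the current `c u v c v w / (c u v + c v w) · (h w - h u)` through the merged edge. So the
reduction only moves the contribution of `v` to the sum at `u` onto the edge `{u, w}`.
-/

open Finset

section

variable {Ω : Type*} [Fintype Ω]

theorem sum_mul_sub_eq_pair_of_support (c : Ω → Ω → ℝ) (h : Ω → ℝ) {u v w : Ω} (huw : u ≠ w)
    (hv : ∀ x, x ≠ u → x ≠ w → c v x = 0) :
    ∑ x, c v x * (h x - h v) = c v u * (h u - h v) + c v w * (h w - h v) :=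
  Fintype.sum_eq_add u w huw fun x hx => by rw [hv x hx.1 hx.2, zero_mul]

theorem series_conductance_mul_sub {K : Type*} [Field K] {a b p q r : K} (hab : a + b ≠ 0)
    (hkirchhoff : a * (p - q) + b * (r - q) = 0) :
    a * b / (a + b) * (r - p) = a * (q - p) := by
  field_simp
  linear_combination a * hkirchhoff

theorem sum_erase_eq_of_eq_off [DecidableEq Ω] {g g' : Ω → ℝ} {v w : Ω} (hvw : v ≠ w)
    (hg' : ∀ x, x ≠ w → g' x = g x) :
    ∑ x ∈ univ.erase v, g' x = ∑ x, g x - g v + (g' w - g w) := by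
  have hdiff : ∑ x, (g' x - g x) = g' w - g w :=
    Fintype.sum_eq_single w fun x hx => by rw [hg' x hx, sub_self]
  rw [sum_erase_eq_sub (mem_univ v), hg' v hvw, ← hdiff, sum_sub_distrib]
  ring

end

theorem series_parallel_reduction_preserves_harmonicity_general
    {Ω : Type*} [Fintype Ω] [DecidableEq Ω]
    (c : Ω → Ω → ℝ) (hsymm : ∀ x y, c x y = c y x)
    (u v w : Ω) (hvw : v ≠ w) (huw : u ≠ w)
    (hv : ∀ x, x ≠ u → x ≠ w → c v x = 0)
    (hpos : 0 < c u v + c v w)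
    (c' : Ω → Ω → ℝ)
    (hc'uw : c' u w = c u w + c u v * c v w / (c u v + c v w))
    (hc'other : ∀ x y, ¬ ((x = u ∧ y = w) ∨ (x = w ∧ y = u)) → c' x y = c x y)
    (h : Ω → ℝ)
    (hharm_v : ∑ x, c v x * (h x - h v) = 0) :
    (∑ x ∈ Finset.univ.erase v, c' u x * (h x - h u)) =
      ∑ x, c u x * (h x - h u) ∧
    ((∑ x, c u x * (h x - h u)) = 0 →
      (∑ x ∈ Finset.univ.erase v, c' u x * (h x - h u)) = 0) := by
  have hkirchhoff : c u v * (h u - h v) + c v w * (h w - h v) = 0 := by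
    rw [hsymm u v, ← sum_mul_sub_eq_pair_of_support c h huw hv, hharm_v]
  have hcurrent := series_conductance_mul_sub hpos.ne' hkirchhoff
  have hreduced : ∑ x ∈ univ.erase v, c' u x * (h x - h u) = ∑ x, c u x * (h x - h u) := by
    rw [sum_erase_eq_of_eq_off hvw fun x hx => by rw [hc'other u x (by tauto)], hc'uw]
    linear_combination hcurrent
  exact ⟨hreduced, fun h0 => hreduced.trans h0⟩

/-- **Series–parallel reduction preserves harmonicity.**
A network `(Ω, c)` is a finite set with a symmetric nonnegative conductance function.
Let `u, v, w` be pairwise distinct with `c v x = 0` for `x ∉ {u, w}` and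
`c u v + c v w > 0`.  Define `c'` on `Ω \ {v}` by merging the series path through `v`
into the edge `{u, w}`.  If `h` satisfies the mean-value equation at `v`, then the
weighted increment sum of `h` at `u` is unchanged by the reduction; in particular
harmonicity of `h` at `u` is preserved. -/
theorem series_parallel_reduction_preserves_harmonicity
    {Ω : Type*} [Fintype Ω] [DecidableEq Ω]
    (c : Ω → Ω → ℝ) (hsymm : ∀ x y, c x y = c y x) (hnonneg : ∀ x y, 0 ≤ c x y)
    (u v w : Ω) (huv : u ≠ v) (hvw : v ≠ w) (huw : u ≠ w)
    (hv : ∀ x, x ≠ u → x ≠ w → c v x = 0)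
    (hpos : 0 < c u v + c v w)
    (c' : Ω → Ω → ℝ)
    (hc'uw : c' u w = c u w + c u v * c v w / (c u v + c v w))
    (hc'wu : c' w u = c' u w)
    (hc'other : ∀ x y, ¬ ((x = u ∧ y = w) ∨ (x = w ∧ y = u)) → c' x y = c x y)
    (h : Ω → ℝ)
    (hharm_v : ∑ x, c v x * (h x - h v) = 0) :
    (∑ x ∈ Finset.univ.erase v, c' u x * (h x - h u)) =
      ∑ x, c u x * (h x - h u) ∧
    ((∑ x, c u x * (h x - h u)) = 0 →
      (∑ x ∈ Finset.univ.erase v, c' u x * (h x - h u)) = 0) :=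
  series_parallel_reduction_preserves_harmonicity_general c hsymm u v w hvw huw hv hpos c' hc'uw
    hc'other h hharm_v
end

section
/- Let n, b ≥ 1 be integers, Ψ an n×b real matrix, y ∈ ℝⁿ, and σ, λ > 0. Let μ̂ ∈ ℝ^b be any minimizer of μ ↦ ‖Ψμ − y‖₂². Then the integral p := ∫_{ℝ^b} (2πσ²)^{−n/2} exp(−‖Ψμ − y‖₂²/(2σ²)) · (2πσ²λ^{−1})^{−b/2} exp(−λ‖μ‖₂²/(2σ²)) dμ, taken with respect to Lebesgue measure on ℝ^b, is finite and strictly positive, and −2·log p = n·log(2πσ²) + log det(λ^{−1}ΨᵀΨ + I_b) + σ^{−2}·( ‖Ψμ̂ − y‖₂² + μ̂ᵀΨᵀ( I_n − Ψ(ΨᵀΨ + λI_b)^{−1}Ψᵀ )Ψμ̂ ). -/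
open MeasureTheory Matrix

section aux
variable {m : ℕ}

lemma gauss_iso_integrable {c : ℝ} (hc : 0 < c) :
    Integrable (fun x : Fin m → ℝ => Real.exp (-c * ∑ i, x i ^ 2)) volume := by
  have h : ∀ x : Fin m → ℝ, Real.exp (-c * ∑ i, x i ^ 2) = ∏ i, Real.exp (-c * x i ^ 2) := by
    intro x
    rw [← Real.exp_sum, Finset.mul_sum]
  simp_rw [h]
  exact Integrable.fintype_prod (f := fun (i : Fin m) (v : ℝ) => Real.exp (-c * v ^ 2))
    (fun i => integrable_exp_neg_mul_sq hc)

lemma gauss_iso_integral {c : ℝ} (hc : 0 < c) :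
    ∫ x : Fin m → ℝ, Real.exp (-c * ∑ i, x i ^ 2) = (Real.pi / c) ^ ((m : ℝ) / 2) := by
  have h : ∀ x : Fin m → ℝ, Real.exp (-c * ∑ i, x i ^ 2) = ∏ i, Real.exp (-c * x i ^ 2) := by
    intro x
    rw [← Real.exp_sum, Finset.mul_sum]
  simp_rw [h]
  rw [integral_fintype_prod_volume_eq_prod (f := fun (i : Fin m) (v : ℝ) => Real.exp (-c * v ^ 2))]
  simp_rw [integral_gaussian]
  rw [Finset.prod_const, Finset.card_univ, Fintype.card_fin]
  rw [← Real.rpow_natCast (Real.sqrt _) m, Real.sqrt_eq_rpow, ← Real.rpow_mul (by positivity)]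
  ring_nf

end aux

section mat
variable {m : ℕ} {A : Matrix (Fin m) (Fin m) ℝ}
open scoped MatrixOrder

lemma gauss_mat (hA : A.PosDef) {c : ℝ} (hc : 0 < c) :
    Integrable (fun x : Fin m → ℝ => Real.exp (-c * (x ⬝ᵥ A *ᵥ x))) volume ∧
    ∫ x : Fin m → ℝ, Real.exp (-c * (x ⬝ᵥ A *ᵥ x))
      = (Real.pi / c) ^ ((m : ℝ) / 2) / Real.sqrt A.det := by
  set S := CFC.sqrt A with hSdef
  have hSA : S * S = A := CFC.sqrt_mul_sqrt_self A (nonneg_iff_posSemidef.mpr hA.posSemidef)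
  have hdetS2 : S.det * S.det = A.det := by rw [← det_mul, hSA]
  have hdetA : 0 < A.det := hA.det_pos
  have hdet0 : S.det ≠ 0 := by
    intro h; rw [h, mul_zero] at hdetS2; exact hdetA.ne' hdetS2.symm
  have habs : |S.det| = Real.sqrt A.det := by
    rw [← hdetS2, ← abs_mul_abs_self S.det, Real.sqrt_mul_self (abs_nonneg _)]
  have hsym : Sᵀ = S := by
    have := (nonneg_iff_posSemidef.mp (CFC.sqrt_nonneg A)).1
    rwa [IsHermitian, conjTranspose_eq_transpose_of_trivial] at this
  have hquad : ∀ x : Fin m → ℝ, x ⬝ᵥ A *ᵥ x = ∑ i, (S *ᵥ x) i ^ 2 := by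
    intro x
    rw [← hSA, ← mulVec_mulVec, dotProduct_mulVec, ← mulVec_transpose, hsym]
    simp [dotProduct, sq]
  have key : ∀ x : Fin m → ℝ,
      Real.exp (-c * (x ⬝ᵥ A *ᵥ x)) = Real.exp (-c * ∑ i, (toLin' S x) i ^ 2) := by
    intro x; rw [hquad, toLin'_apply]
  have hmap : Measure.map (toLin' S) volume = ENNReal.ofReal |S.det|⁻¹ • volume := by
    rw [← abs_inv]
    exact Real.map_matrix_volume_pi_eq_smul_volume_pi hdet0
  have hgcont : Continuous (fun y : Fin m → ℝ => Real.exp (-c * ∑ i, y i ^ 2)) := by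
    fun_prop
  have hTmeas : Measurable (toLin' S : (Fin m → ℝ) →ₗ[ℝ] (Fin m → ℝ)) :=
    (LinearMap.continuous_on_pi _).measurable
  have hint : Integrable (fun x : Fin m → ℝ => Real.exp (-c * (x ⬝ᵥ A *ᵥ x))) volume := by
    simp_rw [key]
    have hg : Integrable (fun y : Fin m → ℝ => Real.exp (-c * ∑ i, y i ^ 2))
        (Measure.map (toLin' S) volume) := by
      rw [hmap]
      exact (gauss_iso_integrable hc).smul_measure ENNReal.ofReal_ne_top
    exact (integrable_map_measure hg.1 hTmeas.aemeasurable).mp hg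
  refine ⟨hint, ?_⟩
  simp_rw [key]
  rw [show ∫ x : Fin m → ℝ, Real.exp (-c * ∑ i, (toLin' S x) i ^ 2)
      = ∫ y, Real.exp (-c * ∑ i, y i ^ 2) ∂(Measure.map (toLin' S) volume) from
    (integral_map hTmeas.aemeasurable
      (by rw [hmap]; exact hgcont.aestronglyMeasurable.smul_measure _)).symm]
  rw [hmap, integral_smul_measure, gauss_iso_integral hc, habs]
  rw [ENNReal.toReal_ofReal (by positivity)]
  rw [smul_eq_mul, inv_mul_eq_div]

end mat

section normal
variable {n b : ℕ}

lemma normal_eq (Ψ : Matrix (Fin n) (Fin b) ℝ) (y : Fin n → ℝ) (μhat : Fin b → ℝ)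
    (hμhat : ∀ μ : Fin b → ℝ,
      (∑ i, (Ψ.mulVec μhat i - y i) ^ 2) ≤ ∑ i, (Ψ.mulVec μ i - y i) ^ 2) :
    Ψᵀ *ᵥ (Ψ *ᵥ μhat - y) = 0 := by
  funext j
  set r : Fin n → ℝ := Ψ *ᵥ μhat - y with hr
  set w : Fin n → ℝ := fun i => Ψ i j with hw
  set a : ℝ := ∑ i, w i * r i with ha
  set c : ℝ := ∑ i, w i ^ 2 with hc
  have hc0 : 0 ≤ c := Finset.sum_nonneg fun i _ => sq_nonneg _
  have key : ∀ t : ℝ, 0 ≤ 2 * t * a + t ^ 2 * c := by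
    intro t
    have h1 := hμhat (μhat + t • (Pi.single j (1:ℝ) : Fin b → ℝ))
    have h2 : ∀ i, Ψ.mulVec (μhat + t • (Pi.single j (1:ℝ) : Fin b → ℝ)) i - y i = r i + t * w i := by
      intro i
      rw [mulVec_add, mulVec_smul, mulVec_single]
      simp [hr, hw]
      ring
    simp_rw [h2] at h1
    have h3 : ∑ i, (r i + t * w i) ^ 2
        = (∑ i, (r i) ^ 2) + (2 * t * a + t ^ 2 * c) := by
      rw [ha, hc, Finset.mul_sum, Finset.mul_sum, ← Finset.sum_add_distrib,
        ← Finset.sum_add_distrib]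
      exact Finset.sum_congr rfl fun i _ => by ring
    rw [h3] at h1
    have h4 : ∑ i, (Ψ.mulVec μhat i - y i) ^ 2 = ∑ i, (r i) ^ 2 := by
      exact Finset.sum_congr rfl fun i _ => by rw [hr]; simp
    linarith [h1, h4 ▸ h1]
  have ha0 : a = 0 := by
    have ht := key (-a / (c + 1))
    have hcp : (0:ℝ) < c + 1 := by linarith
    have heq : 2 * (-a / (c + 1)) * a + (-a / (c + 1)) ^ 2 * c
        = -(a ^ 2 * (c + 2)) / (c + 1) ^ 2 := by
      field_simp
      ring
    rw [heq] at ht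
    have h5 : 0 ≤ -(a ^ 2 * (c + 2)) := by
      have := mul_le_mul_of_nonneg_right ht (le_of_lt (pow_pos hcp 2))
      rw [div_mul_cancel₀] at this
      · simpa using this
      · positivity
    nlinarith [sq_nonneg a]
  have : (Ψᵀ *ᵥ r) j = a := by
    simp [mulVec, dotProduct, ha, hw, transpose_apply, mul_comm]
  rw [hr] at this ⊢
  simp [this, ha0]

end normal

/-- **Log marginal likelihood formula for Bayesian linear regression.**
The Gaussian marginal likelihood integral `p` is finite, strictly positive, and
`−2 log p` equals the explicit formula involving `log det(λ⁻¹ΨᵀΨ + I)` and the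
least-squares residual and shrinkage terms. -/
theorem log_marginal_likelihood_formula
    (n b : ℕ) (hn : 1 ≤ n) (hb : 1 ≤ b)
    (Ψ : Matrix (Fin n) (Fin b) ℝ) (y : Fin n → ℝ)
    (σ lam : ℝ) (hσ : 0 < σ) (hlam : 0 < lam)
    (μhat : Fin b → ℝ)
    (hμhat : ∀ μ : Fin b → ℝ,
      (∑ i, (Ψ.mulVec μhat i - y i) ^ 2) ≤ ∑ i, (Ψ.mulVec μ i - y i) ^ 2) :
    Integrable (fun μ : Fin b → ℝ =>
        ((2 * Real.pi * σ ^ 2) ^ (-(n : ℝ) / 2) *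
            Real.exp (-(∑ i, (Ψ.mulVec μ i - y i) ^ 2) / (2 * σ ^ 2))) *
          ((2 * Real.pi * σ ^ 2 * lam⁻¹) ^ (-(b : ℝ) / 2) *
            Real.exp (-(lam * ∑ j, μ j ^ 2) / (2 * σ ^ 2)))) volume ∧
    0 < (∫ μ : Fin b → ℝ,
        ((2 * Real.pi * σ ^ 2) ^ (-(n : ℝ) / 2) *
            Real.exp (-(∑ i, (Ψ.mulVec μ i - y i) ^ 2) / (2 * σ ^ 2))) *
          ((2 * Real.pi * σ ^ 2 * lam⁻¹) ^ (-(b : ℝ) / 2) *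
            Real.exp (-(lam * ∑ j, μ j ^ 2) / (2 * σ ^ 2)))) ∧
    (-2 : ℝ) * Real.log (∫ μ : Fin b → ℝ,
        ((2 * Real.pi * σ ^ 2) ^ (-(n : ℝ) / 2) *
            Real.exp (-(∑ i, (Ψ.mulVec μ i - y i) ^ 2) / (2 * σ ^ 2))) *
          ((2 * Real.pi * σ ^ 2 * lam⁻¹) ^ (-(b : ℝ) / 2) *
            Real.exp (-(lam * ∑ j, μ j ^ 2) / (2 * σ ^ 2)))) =
      (n : ℝ) * Real.log (2 * Real.pi * σ ^ 2) +
        Real.log ((lam⁻¹ • (Ψᵀ * Ψ) + 1).det) +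
        (σ ^ 2)⁻¹ *
          ((∑ i, (Ψ.mulVec μhat i - y i) ^ 2) +
            (Ψ.mulVec μhat) ⬝ᵥ
              (((1 : Matrix (Fin n) (Fin n) ℝ) -
                  Ψ * (Ψᵀ * Ψ + lam • (1 : Matrix (Fin b) (Fin b) ℝ))⁻¹ * Ψᵀ).mulVec
                (Ψ.mulVec μhat))) := by
  have hπ : (0:ℝ) < 2 * Real.pi * σ ^ 2 := by positivity
  set A : Matrix (Fin b) (Fin b) ℝ := Ψᵀ * Ψ + lam • (1 : Matrix (Fin b) (Fin b) ℝ) with hAdef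
  have hAsym : Aᵀ = A := by
    rw [hAdef, transpose_add, transpose_mul, transpose_transpose, transpose_smul, transpose_one]
  have hdotΨ : ∀ (x : Fin b → ℝ) (w : Fin n → ℝ), x ⬝ᵥ (Ψᵀ *ᵥ w) = (Ψ *ᵥ x) ⬝ᵥ w := by
    intro x w; rw [dotProduct_mulVec, vecMul_transpose]
  have hdotΨ' : ∀ (w : Fin n → ℝ) (x : Fin b → ℝ), w ⬝ᵥ (Ψ *ᵥ x) = (Ψᵀ *ᵥ w) ⬝ᵥ x := by
    intro w x; rw [dotProduct_mulVec, ← mulVec_transpose]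
  have hquadA : ∀ x : Fin b → ℝ, x ⬝ᵥ A *ᵥ x = (Ψ *ᵥ x) ⬝ᵥ (Ψ *ᵥ x) + lam * (x ⬝ᵥ x) := by
    intro x
    rw [hAdef, add_mulVec, dotProduct_add, ← mulVec_mulVec, hdotΨ, smul_mulVec, one_mulVec,
      dotProduct_smul, smul_eq_mul]
  have hA : A.PosDef := by
    refine posDef_iff_dotProduct_mulVec.mpr ⟨?_, ?_⟩
    · rw [IsHermitian, conjTranspose_eq_transpose_of_trivial, hAsym]
    · intro x hx
      rw [star_trivial, hquadA]
      have h2 : 0 ≤ (Ψ *ᵥ x) ⬝ᵥ (Ψ *ᵥ x) := by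
        simp only [dotProduct]
        exact Finset.sum_nonneg fun i _ => mul_self_nonneg _
      have h3 : 0 < x ⬝ᵥ x := by
        obtain ⟨i, hi⟩ := Function.ne_iff.mp hx
        have : (0:ℝ) < x i * x i := by
          rcases lt_or_gt_of_ne (show x i ≠ 0 by simpa using hi) with h | h
          · exact mul_pos_of_neg_of_neg h h
          · exact mul_pos h h
        refine lt_of_lt_of_le this ?_
        exact Finset.single_le_sum (fun i _ => mul_self_nonneg (x i)) (Finset.mem_univ i)
      nlinarith
  have hdetpos : 0 < A.det := hA.det_pos
  have hdet : A.det ≠ 0 := hdetpos.ne'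
  set v : Fin b → ℝ := Ψᵀ *ᵥ y with hv
  set mv : Fin b → ℝ := A⁻¹ *ᵥ v with hmv
  have hAinvT : (A⁻¹)ᵀ = A⁻¹ := by rw [transpose_nonsing_inv, hAsym]
  have hAmv : A *ᵥ mv = v := by
    rw [hmv, mulVec_mulVec, mul_nonsing_inv _ hdet.isUnit, one_mulVec]
  set c₀ : ℝ := y ⬝ᵥ y - v ⬝ᵥ (A⁻¹ *ᵥ v) with hc₀def
  have hsymdot : ∀ x z : Fin b → ℝ, x ⬝ᵥ A *ᵥ z = z ⬝ᵥ A *ᵥ x := by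
    intro x z
    rw [dotProduct_mulVec, ← mulVec_transpose, hAsym, dotProduct_comm]
  have hquad : ∀ μ : Fin b → ℝ,
      (∑ i, (Ψ.mulVec μ i - y i) ^ 2) + lam * ∑ j, μ j ^ 2
        = (μ - mv) ⬝ᵥ A *ᵥ (μ - mv) + c₀ := by
    intro μ
    have e1 : (∑ i, (Ψ.mulVec μ i - y i) ^ 2) = (Ψ *ᵥ μ - y) ⬝ᵥ (Ψ *ᵥ μ - y) := by
      simp [dotProduct, sq]
    have e2 : (∑ j, μ j ^ 2) = μ ⬝ᵥ μ := by simp [dotProduct, sq]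
    have hyv : y ⬝ᵥ (Ψ *ᵥ μ) = v ⬝ᵥ μ := by rw [hdotΨ', hv]
    have hvy : (Ψ *ᵥ μ) ⬝ᵥ y = v ⬝ᵥ μ := by rw [dotProduct_comm, hyv]
    have e3 : (Ψ *ᵥ μ - y) ⬝ᵥ (Ψ *ᵥ μ - y)
        = (Ψ *ᵥ μ) ⬝ᵥ (Ψ *ᵥ μ) - 2 * (v ⬝ᵥ μ) + y ⬝ᵥ y := by
      rw [sub_dotProduct, dotProduct_sub, dotProduct_sub, hvy, hyv]
      ring
    have hm1 : μ ⬝ᵥ A *ᵥ mv = v ⬝ᵥ μ := by rw [hAmv, dotProduct_comm]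
    have hm2 : mv ⬝ᵥ A *ᵥ μ = v ⬝ᵥ μ := by rw [hsymdot, hm1]
    have hm3 : mv ⬝ᵥ A *ᵥ mv = v ⬝ᵥ (A⁻¹ *ᵥ v) := by
      rw [hAmv, hmv, dotProduct_comm]
    have e4 : (μ - mv) ⬝ᵥ A *ᵥ (μ - mv)
        = μ ⬝ᵥ A *ᵥ μ - 2 * (v ⬝ᵥ μ) + v ⬝ᵥ (A⁻¹ *ᵥ v) := by
      rw [mulVec_sub, sub_dotProduct, dotProduct_sub, dotProduct_sub, hm1, hm2, hm3]
      ring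
    rw [e1, e2, e3, e4, hquadA μ, hc₀def]
    ring
  -- normal equations consequences
  have hne := normal_eq Ψ y μhat hμhat
  have hnorm : Ψᵀ *ᵥ (Ψ *ᵥ μhat) = v := by
    rw [mulVec_sub] at hne
    rw [hv]
    exact sub_eq_zero.mp hne
  -- c₀ identity
  set u : Fin n → ℝ := Ψ *ᵥ μhat with hu
  have hc₀ : c₀ = (∑ i, (Ψ.mulVec μhat i - y i) ^ 2) +
      u ⬝ᵥ (((1 : Matrix (Fin n) (Fin n) ℝ) - Ψ * A⁻¹ * Ψᵀ) *ᵥ u) := by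
    have t1 : ((1 : Matrix (Fin n) (Fin n) ℝ) - Ψ * A⁻¹ * Ψᵀ) *ᵥ u
        = u - Ψ *ᵥ (A⁻¹ *ᵥ v) := by
      rw [sub_mulVec, one_mulVec, ← mulVec_mulVec, ← mulVec_mulVec, hnorm]
    have t2 : u ⬝ᵥ (Ψ *ᵥ (A⁻¹ *ᵥ v)) = v ⬝ᵥ (A⁻¹ *ᵥ v) := by
      rw [dotProduct_mulVec, ← mulVec_transpose, hnorm]
    have t4 : u ⬝ᵥ u = v ⬝ᵥ μhat := by
      rw [dotProduct_mulVec (v := u), ← mulVec_transpose, hnorm]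
    have t3 : (∑ i, (Ψ.mulVec μhat i - y i) ^ 2) = u ⬝ᵥ u - 2 * (v ⬝ᵥ μhat) + y ⬝ᵥ y := by
      have e1 : (∑ i, (Ψ.mulVec μhat i - y i) ^ 2) = (u - y) ⬝ᵥ (u - y) := by
        simp [dotProduct, sq, hu]
      have hyv : y ⬝ᵥ u = v ⬝ᵥ μhat := by rw [hu, hdotΨ', hv]
      have hvy : u ⬝ᵥ y = v ⬝ᵥ μhat := by rw [dotProduct_comm, hyv]
      rw [e1, sub_dotProduct, dotProduct_sub, dotProduct_sub, hvy, hyv]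
      ring
    rw [t1, dotProduct_sub, t2, t3, t4, hc₀def]
    ring
  -- analytic part
  set cσ : ℝ := (2 * σ ^ 2)⁻¹ with hcσdef
  have hcσ : 0 < cσ := by rw [hcσdef]; positivity
  set K : ℝ := (2 * Real.pi * σ ^ 2) ^ (-(n : ℝ) / 2) *
      (2 * Real.pi * σ ^ 2 * lam⁻¹) ^ (-(b : ℝ) / 2) with hK
  have hKpos : 0 < K := by
    rw [hK]
    have h1 : (0:ℝ) < 2 * Real.pi * σ ^ 2 * lam⁻¹ := by positivity
    exact mul_pos (Real.rpow_pos_of_pos hπ _) (Real.rpow_pos_of_pos h1 _)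
  have hpt : ∀ μ : Fin b → ℝ,
      ((2 * Real.pi * σ ^ 2) ^ (-(n : ℝ) / 2) *
          Real.exp (-(∑ i, (Ψ.mulVec μ i - y i) ^ 2) / (2 * σ ^ 2))) *
        ((2 * Real.pi * σ ^ 2 * lam⁻¹) ^ (-(b : ℝ) / 2) *
          Real.exp (-(lam * ∑ j, μ j ^ 2) / (2 * σ ^ 2)))
      = (K * Real.exp (-c₀ * cσ)) *
          Real.exp (-cσ * ((μ - mv) ⬝ᵥ A *ᵥ (μ - mv))) := by
    intro μ
    have hexp : (-(∑ i, (Ψ.mulVec μ i - y i) ^ 2) / (2 * σ ^ 2)) +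
        (-(lam * ∑ j, μ j ^ 2) / (2 * σ ^ 2))
        = (-c₀ * cσ) + (-cσ * ((μ - mv) ⬝ᵥ A *ᵥ (μ - mv))) := by
      have hq := hquad μ
      have hsum : -(∑ i, (Ψ.mulVec μ i - y i) ^ 2) + -(lam * ∑ j, μ j ^ 2)
          = -((((μ - mv) ⬝ᵥ A *ᵥ (μ - mv))) + c₀) := by linarith [hq]
      rw [← add_div, hsum, hcσdef, neg_div, div_eq_mul_inv]
      ring
    calc ((2 * Real.pi * σ ^ 2) ^ (-(n : ℝ) / 2) *
          Real.exp (-(∑ i, (Ψ.mulVec μ i - y i) ^ 2) / (2 * σ ^ 2))) *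
        ((2 * Real.pi * σ ^ 2 * lam⁻¹) ^ (-(b : ℝ) / 2) *
          Real.exp (-(lam * ∑ j, μ j ^ 2) / (2 * σ ^ 2)))
        = K * Real.exp ((-(∑ i, (Ψ.mulVec μ i - y i) ^ 2) / (2 * σ ^ 2)) +
            (-(lam * ∑ j, μ j ^ 2) / (2 * σ ^ 2))) := by
          rw [Real.exp_add, hK]; ring
      _ = (K * Real.exp (-c₀ * cσ)) * Real.exp (-cσ * ((μ - mv) ⬝ᵥ A *ᵥ (μ - mv))) := by
          rw [hexp, Real.exp_add]; ring
  obtain ⟨hgi, hgint⟩ := gauss_mat hA hcσ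
  have hI1 : Integrable
      (fun μ : Fin b → ℝ => Real.exp (-cσ * ((μ - mv) ⬝ᵥ A *ᵥ (μ - mv)))) volume :=
    hgi.comp_sub_right mv
  have hInt : Integrable (fun μ : Fin b → ℝ =>
      ((2 * Real.pi * σ ^ 2) ^ (-(n : ℝ) / 2) *
          Real.exp (-(∑ i, (Ψ.mulVec μ i - y i) ^ 2) / (2 * σ ^ 2))) *
        ((2 * Real.pi * σ ^ 2 * lam⁻¹) ^ (-(b : ℝ) / 2) *
          Real.exp (-(lam * ∑ j, μ j ^ 2) / (2 * σ ^ 2)))) volume := by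
    simp_rw [hpt]
    exact hI1.const_mul _
  have hIntEq : (∫ μ : Fin b → ℝ,
      ((2 * Real.pi * σ ^ 2) ^ (-(n : ℝ) / 2) *
          Real.exp (-(∑ i, (Ψ.mulVec μ i - y i) ^ 2) / (2 * σ ^ 2))) *
        ((2 * Real.pi * σ ^ 2 * lam⁻¹) ^ (-(b : ℝ) / 2) *
          Real.exp (-(lam * ∑ j, μ j ^ 2) / (2 * σ ^ 2))))
      = (K * Real.exp (-c₀ * cσ)) * ((Real.pi / cσ) ^ ((b : ℝ) / 2) / Real.sqrt A.det) := by
    simp_rw [hpt]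
    rw [integral_const_mul]
    congr 1
    rw [show (fun μ : Fin b → ℝ => Real.exp (-cσ * ((μ - mv) ⬝ᵥ A *ᵥ (μ - mv))))
        = (fun μ : Fin b → ℝ => (fun x : Fin b → ℝ =>
            Real.exp (-cσ * (x ⬝ᵥ A *ᵥ x))) (μ - mv)) from rfl]
    rw [integral_sub_right_eq_self (fun x : Fin b → ℝ => Real.exp (-cσ * (x ⬝ᵥ A *ᵥ x))) mv]
    exact hgint
  -- determinant relation
  set Dd : ℝ := (lam⁻¹ • (Ψᵀ * Ψ) + 1).det with hDdef
  have hDA : A = lam • (lam⁻¹ • (Ψᵀ * Ψ) + 1) := by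
    rw [hAdef, smul_add, smul_smul, mul_inv_cancel₀ hlam.ne', one_smul]
  have hdetD : A.det = lam ^ b * Dd := by
    rw [hDA, det_smul, Fintype.card_fin, hDdef]
  have hDpos : 0 < Dd := by
    have hlb : (0:ℝ) < lam ^ b := pow_pos hlam b
    nlinarith [hdetpos, hdetD]
  have hπcσ : Real.pi / cσ = 2 * Real.pi * σ ^ 2 := by
    rw [hcσdef, div_inv_eq_mul]; ring
  have hsqrtlam : Real.sqrt (lam ^ b) = lam ^ ((b:ℝ)/2) := by
    rw [← Real.rpow_natCast lam b, Real.sqrt_eq_rpow, ← Real.rpow_mul hlam.le]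
    ring_nf
  have hsqrtA : Real.sqrt A.det = lam ^ ((b:ℝ)/2) * Real.sqrt Dd := by
    rw [hdetD, Real.sqrt_mul (by positivity), hsqrtlam]
  have hKsplit : K = (2 * Real.pi * σ ^ 2) ^ (-(n:ℝ)/2) *
      ((2 * Real.pi * σ ^ 2) ^ (-(b:ℝ)/2) * lam ^ ((b:ℝ)/2)) := by
    rw [hK, Real.mul_rpow hπ.le (by positivity), Real.inv_rpow hlam.le,
      ← Real.rpow_neg hlam.le]
    norm_num [neg_div]
  have h2 : (2 * Real.pi * σ ^ 2) ^ (-(b:ℝ)/2) * (2 * Real.pi * σ ^ 2) ^ ((b:ℝ)/2) = 1 := by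
    rw [← Real.rpow_add hπ, neg_div, neg_add_cancel, Real.rpow_zero]
  have h3 : lam ^ ((b:ℝ)/2) ≠ 0 := (Real.rpow_pos_of_pos hlam _).ne'
  have h4 : Real.sqrt Dd ≠ 0 := (Real.sqrt_pos.mpr hDpos).ne'
  have hsimp : (K * Real.exp (-c₀ * cσ)) * ((Real.pi / cσ) ^ ((b : ℝ) / 2) / Real.sqrt A.det)
      = (2 * Real.pi * σ ^ 2) ^ (-(n:ℝ)/2) * Real.exp (-c₀ * cσ) / Real.sqrt Dd := by
    rw [hπcσ, hsqrtA, hKsplit]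
    field_simp
    linear_combination (by rw [neg_div] at h2; exact h2 :
      (2 * Real.pi * σ ^ 2) ^ (-((b:ℝ)/2)) * (2 * Real.pi * σ ^ 2) ^ ((b:ℝ)/2) = 1)
  rw [hIntEq, hsimp]
  have hPpos : 0 < (2 * Real.pi * σ ^ 2) ^ (-(n:ℝ)/2) * Real.exp (-c₀ * cσ) / Real.sqrt Dd :=
    div_pos (mul_pos (Real.rpow_pos_of_pos hπ _) (Real.exp_pos _)) (Real.sqrt_pos.mpr hDpos)
  refine ⟨hInt, hPpos, ?_⟩
  rw [Real.log_div (by positivity) h4, Real.log_mul (Real.rpow_pos_of_pos hπ _).ne'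
    (Real.exp_ne_zero _), Real.log_rpow hπ, Real.log_exp, Real.log_sqrt hDpos.le, ← hc₀, hcσdef]
  have hσ2 : (σ:ℝ) ^ 2 ≠ 0 := by positivity
  field_simp
  ring
end

section
/- Let B ≥ 2 be an integer, let I = {1, …, B}, let ν be a measure on I with ν({i}) > 0 for every i ∈ I, and let g : I → ℝ be non-constant. Then there exists a knot t ∈ {1, …, B−1} of g, i.e. an index with g(t) ≠ g(t+1), such that the decision stump ψ_t : I → ℝ defined by ψ_t(x) := ( ν({x' ∈ I : x' > t})·1{x ≤ t} − ν({x' ∈ I : x' ≤ t})·1{x > t} ) / √( ν({x' ∈ I : x' ≤ t})·ν({x' ∈ I : x' > t}) ) satisfies (∫_I ψ_t·g dν)² > 0. -/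
/-! Put `W = ν(I)`, `G = ∫ g dν` and `S u = ∑_{i ≤ u} (W g i - G) ν i`. The stump correlation at `t`
is `S t / √(ν(≤ t) ν(> t))`. Now `S 0 = S B = 0`, and `S` is not identically zero because `g` is
non-constant. At the last maximiser `t` of `|S|`, the increment `(W g t - G) ν t` into `t` does not
oppose the sign of `S t` while the increment `(W g (t+1) - G) ν (t+1)` out of `t` does, so
`g t ≠ g (t + 1)` and `S t ≠ 0`. -/

/-- The decision stump on `I = {1,…,B}` at threshold `t`, with respect to weights `ν`. -/
noncomputable def decisionStump (B t : ℕ) (ν : ℕ → ℝ) (x : ℕ) : ℝ :=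
  ((∑ i ∈ Finset.Icc (t + 1) B, ν i) * (if x ≤ t then 1 else 0) -
      (∑ i ∈ Finset.Icc 1 t, ν i) * (if x ≤ t then 0 else 1)) /
    Real.sqrt ((∑ i ∈ Finset.Icc 1 t, ν i) * (∑ i ∈ Finset.Icc (t + 1) B, ν i))

open Finset

lemma exists_abs_max_last {f : ℕ → ℝ} {B : ℕ} (h0 : f 0 = 0) (hB : f B = 0)
    (hf : ∃ u ≤ B, f u ≠ 0) :
    ∃ t, 0 < t ∧ t < B ∧ f t ≠ 0 ∧ |f (t - 1)| ≤ |f t| ∧ |f (t + 1)| < |f t| := by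
  obtain ⟨m, hm, hmax⟩ := exists_max_image (range (B + 1)) (|f ·|) ⟨0, by simp⟩
  have hmax' : ∀ u ≤ B, |f u| ≤ |f m| := fun u hu => hmax u (mem_range_succ_iff.2 hu)
  set t := Nat.findGreatest (fun u => |f u| = |f m|) B
  have htm : |f t| = |f m| :=
    Nat.findGreatest_spec (P := fun u => |f u| = |f m|) (mem_range_succ_iff.1 hm) rfl
  have htB : t ≤ B := Nat.findGreatest_le B
  obtain ⟨u, hu, hfu⟩ := hf
  have hft : 0 < |f t| := htm ▸ (abs_pos.2 hfu).trans_le (hmax' u hu)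
  have ht0 : t ≠ 0 := by rintro h; simp [h, h0] at hft
  have htB' : t ≠ B := by rintro h; simp [h, hB] at hft
  refine ⟨t, by omega, by omega, abs_pos.1 hft, htm ▸ hmax' _ (by omega), ?_⟩
  exact htm ▸ (hmax' _ (by omega)).lt_of_ne
    (Nat.findGreatest_is_greatest (Nat.lt_succ_self t) (by omega))

lemma sum_Icc_one_add_sum_Icc_succ {M : Type*} [AddCommMonoid M] (f : ℕ → M) {t B : ℕ}
    (ht : t ≤ B) :
    ∑ i ∈ Icc 1 t, f i + ∑ i ∈ Icc (t + 1) B, f i = ∑ i ∈ Icc 1 B, f i := by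
  have hIoc (a b : ℕ) : Icc (a + 1) b = Ioc a b := Icc_add_one_left_eq_Ioc a b
  rw [hIoc, hIoc]
  exact sum_Ioc_consecutive f t.zero_le ht

lemma sum_Icc_pos {ν : ℕ → ℝ} {B a b : ℕ} (hν : ∀ i ∈ Icc 1 B, 0 < ν i)
    (ha : 1 ≤ a) (hab : a ≤ b) (hb : b ≤ B) : 0 < ∑ i ∈ Icc a b, ν i :=
  sum_pos (fun i hi => hν i (Icc_subset_Icc ha hb hi)) (nonempty_Icc.2 hab)

lemma sub_mul_self_nonneg_of_abs_le {a b : ℝ} (h : |a| ≤ |b|) : 0 ≤ (b - a) * b := by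
  nlinarith [abs_mul_abs_self b, abs_mul a b, le_abs_self (a * b), abs_nonneg a, abs_nonneg b]

lemma sub_mul_self_neg_of_abs_lt {a b : ℝ} (h : |a| < |b|) : (a - b) * b < 0 := by
  nlinarith [abs_mul_abs_self b, abs_mul a b, le_abs_self (a * b), abs_nonneg a, abs_nonneg b]

noncomputable def discrepancy (B : ℕ) (ν g : ℕ → ℝ) (u : ℕ) : ℝ :=
  ∑ i ∈ Icc 1 u, ((∑ j ∈ Icc 1 B, ν j) * g i - ∑ j ∈ Icc 1 B, g j * ν j) * ν i

section discrepancy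

variable (B : ℕ) (ν g : ℕ → ℝ)

@[simp] lemma discrepancy_zero : discrepancy B ν g 0 = 0 := by
  simp [discrepancy]

lemma discrepancy_self : discrepancy B ν g B = 0 := by
  simp only [discrepancy, sub_mul, sum_sub_distrib, mul_assoc, ← mul_sum]
  ring

lemma discrepancy_succ_sub (k : ℕ) :
    discrepancy B ν g (k + 1) - discrepancy B ν g k =
      ((∑ j ∈ Icc 1 B, ν j) * g (k + 1) - ∑ j ∈ Icc 1 B, g j * ν j) * ν (k + 1) := by
  rw [discrepancy, discrepancy, sum_Icc_succ_top (by omega), add_sub_cancel_left]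

lemma discrepancy_eq {t : ℕ} (ht : t ≤ B) :
    discrepancy B ν g t =
      (∑ i ∈ Icc (t + 1) B, ν i) * (∑ i ∈ Icc 1 t, g i * ν i) -
        (∑ i ∈ Icc 1 t, ν i) * (∑ i ∈ Icc (t + 1) B, g i * ν i) := by
  simp only [discrepancy, sub_mul, sum_sub_distrib, mul_assoc, ← mul_sum,
    ← sum_Icc_one_add_sum_Icc_succ _ ht]
  ring

lemma sum_decisionStump_mul {t : ℕ} (ht : t ≤ B) :
    ∑ x ∈ Icc 1 B, decisionStump B t ν x * g x * ν x =
      discrepancy B ν g t /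
        Real.sqrt ((∑ i ∈ Icc 1 t, ν i) * (∑ i ∈ Icc (t + 1) B, ν i)) := by
  set L := ∑ i ∈ Icc 1 t, ν i
  set R := ∑ i ∈ Icc (t + 1) B, ν i
  have hleft : ∑ x ∈ Icc 1 t, decisionStump B t ν x * g x * ν x =
      R / √(L * R) * ∑ i ∈ Icc 1 t, g i * ν i := by
    rw [mul_sum]
    refine sum_congr rfl fun x hx => ?_
    simp only [decisionStump, if_pos (mem_Icc.1 hx).2]
    ring
  have hright : ∑ x ∈ Icc (t + 1) B, decisionStump B t ν x * g x * ν x =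
      -L / √(L * R) * ∑ i ∈ Icc (t + 1) B, g i * ν i := by
    rw [mul_sum]
    refine sum_congr rfl fun x hx => ?_
    simp only [decisionStump, if_neg (Nat.not_le.2 (mem_Icc.1 hx).1)]
    ring
  rw [← sum_Icc_one_add_sum_Icc_succ _ ht, hleft, hright, discrepancy_eq B ν g ht]
  ring

end discrepancy

lemma exists_discrepancy_ne_zero {B : ℕ} {ν g : ℕ → ℝ} (hν : ∀ i ∈ Icc 1 B, 0 < ν i)
    (hg : ∃ i ∈ Icc 1 B, ∃ j ∈ Icc 1 B, g i ≠ g j) :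
    ∃ u ≤ B, discrepancy B ν g u ≠ 0 := by
  by_contra! hzero
  have hflat : ∀ i ∈ Icc 1 B, (∑ j ∈ Icc 1 B, ν j) * g i = ∑ j ∈ Icc 1 B, g j * ν j := by
    intro i hi
    obtain ⟨k, rfl⟩ : ∃ k, i = k + 1 := ⟨i - 1, by grind⟩
    have hstep := discrepancy_succ_sub B ν g k
    rw [hzero (k + 1) (by grind), hzero k (by grind), sub_self, eq_comm, mul_eq_zero] at hstep
    exact sub_eq_zero.1 (hstep.resolve_right (hν _ hi).ne')
  obtain ⟨i, hi, j, hj, hij⟩ := hg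
  have hW : 0 < ∑ j ∈ Icc 1 B, ν j := sum_Icc_pos hν le_rfl (by grind) le_rfl
  exact hij (mul_left_cancel₀ hW.ne' ((hflat i hi).trans (hflat j hj).symm))

lemma ne_succ_of_abs_discrepancy_peak {B t : ℕ} {ν g : ℕ → ℝ} (ht : 0 < t) (hνt : 0 < ν t)
    (hνt' : 0 < ν (t + 1))
    (hprev : |discrepancy B ν g (t - 1)| ≤ |discrepancy B ν g t|)
    (hnext : |discrepancy B ν g (t + 1)| < |discrepancy B ν g t|) :
    g t ≠ g (t + 1) := by
  intro hgt
  have hrise := sub_mul_self_nonneg_of_abs_le hprev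
  have hfall := sub_mul_self_neg_of_abs_lt hnext
  have hstep := discrepancy_succ_sub B ν g (t - 1)
  rw [Nat.sub_add_cancel ht] at hstep
  rw [hstep] at hrise
  rw [discrepancy_succ_sub, ← hgt] at hfall
  set c := (∑ j ∈ Icc 1 B, ν j) * g t - ∑ j ∈ Icc 1 B, g j * ν j
  nlinarith

theorem exists_informative_split_general
    (B : ℕ) (ν : ℕ → ℝ)
    (hν : ∀ i ∈ Finset.Icc 1 B, 0 < ν i)
    (g : ℕ → ℝ)
    (hg : ∃ i ∈ Finset.Icc 1 B, ∃ j ∈ Finset.Icc 1 B, g i ≠ g j) :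
    ∃ t ∈ Finset.Icc 1 (B - 1),
      g t ≠ g (t + 1) ∧
        0 < (∑ x ∈ Finset.Icc 1 B, decisionStump B t ν x * g x * ν x) ^ 2 := by
  obtain ⟨t, ht, htB, hpeak, hprev, hnext⟩ := exists_abs_max_last (discrepancy_zero B ν g)
    (discrepancy_self B ν g) (exists_discrepancy_ne_zero hν hg)
  have hνt : 0 < ν t := hν t (mem_Icc.2 ⟨ht, htB.le⟩)
  have hνt' : 0 < ν (t + 1) := hν (t + 1) (mem_Icc.2 ⟨by omega, htB⟩)
  refine ⟨t, mem_Icc.2 ⟨ht, by omega⟩,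
    ne_succ_of_abs_discrepancy_peak ht hνt hνt' hprev hnext, ?_⟩
  have hL : 0 < ∑ i ∈ Icc 1 t, ν i := sum_Icc_pos hν le_rfl ht htB.le
  have hR : 0 < ∑ i ∈ Icc (t + 1) B, ν i := sum_Icc_pos hν (by omega) htB le_rfl
  rw [sum_decisionStump_mul B ν g htB.le]
  exact pow_two_pos_of_ne_zero (div_ne_zero hpeak (Real.sqrt_pos.2 (mul_pos hL hR)).ne')

/-- **Existence of an informative split.**  For any non-constant function `g` on
`I = {1,…,B}` and any fully supported measure `ν` on `I`, there is a knot `t` of `g`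
(an index with `g t ≠ g (t+1)`) whose decision stump has strictly positive squared
correlation with `g`. -/
theorem exists_informative_split
    (B : ℕ) (hB : 2 ≤ B) (ν : ℕ → ℝ)
    (hν : ∀ i ∈ Finset.Icc 1 B, 0 < ν i)
    (g : ℕ → ℝ)
    (hg : ∃ i ∈ Finset.Icc 1 B, ∃ j ∈ Finset.Icc 1 B, g i ≠ g j) :
    ∃ t ∈ Finset.Icc 1 (B - 1),
      g t ≠ g (t + 1) ∧
        0 < (∑ x ∈ Finset.Icc 1 B, decisionStump B t ν x * g x * ν x) ^ 2 :=
  exists_informative_split_general B ν hν g hg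
end
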